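/- Let n ≥ 4 be odd and let I ⊆ {1,…,n} be nonempty. The I-canonical elements for the integer lattice 𝔍_Spin of Spin(2n) are precisely the following elements, where j ranges over the odd elements of I_0 and s ranges over I ∩ {n−1,n}: (a) if Σ_{i∈I_0} i is even, the elements ξ_I + 3ε^1_I H_s and ξ_I + ε^1_I (H_s + H_j); (b) if Σ_{i∈I_0} i is odd, the elements ξ_I + ε^0_I H_j + ε^1_I H_s + 2ε^2_I H_s and ξ_I + ε^0_I H_j + ε^1_I H_s + ε^2_I H_j. -/
import Mathlib


/-- The duals of the simple roots of `so(2n)` (1-based index):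
`H_i = E_1+⋯+E_i` for `i ≤ n-2`, `H_{n-1} = (E_1+⋯+E_{n-1}-E_n)/2`,
`H_n = (E_1+⋯+E_{n-1}+E_n)/2`. -/
noncomputable def Hso (n i : ℕ) : Fin n → ℝ :=
  if i = n - 1 then (fun j => if (j : ℕ) + 2 ≤ n then 1 / 2 else -(1 / 2))
  else if i = n then (fun _ => 1 / 2)
  else fun j => if (j : ℕ) + 1 ≤ i then 1 else 0

/-- `ε^i_I = 1` if `|I ∩ {n-1, n}| = i`, and `0` otherwise. -/
def epsI (n : ℕ) (I : Finset ℕ) (i : ℕ) : ℕ :=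
  if (I ∩ {n - 1, n}).card = i then 1 else 0

/-- The integer lattice of `Spin(2n)`: integer vectors with even coordinate sum. -/
def JSpin (n : ℕ) : Set (Fin n → ℝ) :=
  {v | ∃ a : Fin n → ℤ, (∀ j, v j = a j) ∧ Even (∑ j, a j)}

/-- The set of `I`-canonical elements for a lattice `𝔏 ⊆ ℝ^n`. -/
def ICanonSet (n : ℕ) (𝔏 : Set (Fin n → ℝ)) (H : ℕ → Fin n → ℝ) (I : Finset ℕ) :
    Set (Fin n → ℝ) :=
  {ξ | ∃ c : ℕ → ℕ, (∀ i ∈ I, 1 ≤ c i) ∧ ξ = ∑ i ∈ I, c i • H i ∧ ξ ∈ 𝔏 ∧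
    ∀ c' : ℕ → ℕ, (∀ i ∈ I, 1 ≤ c' i ∧ c' i ≤ c i) →
      (∑ i ∈ I, c' i • H i) ∈ 𝔏 → (∑ i ∈ I, c' i • H i) = ξ}

open Finset

namespace SC

variable {n : ℕ}

lemma hso_low (hn : 4 ≤ n) {i : ℕ} (hi2 : i ≤ n - 2) (j : Fin n) :
    Hso n i j = if (j : ℕ) + 1 ≤ i then 1 else 0 := by
  have h1 : i ≠ n - 1 := by omega
  have h2 : i ≠ n := by omega
  simp [Hso, h1, h2]

lemma hso_nm1 (hn : 4 ≤ n) (j : Fin n) :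
    Hso n (n-1) j = if (j : ℕ) + 2 ≤ n then (1:ℝ)/2 else -(1/2) := by
  simp [Hso]

lemma hso_n (hn : 4 ≤ n) (j : Fin n) : Hso n n j = 1/2 := by
  have : n ≠ n - 1 := by omega
  simp [Hso, this]

/-- coefficient extended by zero outside I -/
def ec (I : Finset ℕ) (c : ℕ → ℕ) (i : ℕ) : ℕ := if i ∈ I then c i else 0

def S0 (n : ℕ) (I : Finset ℕ) (c : ℕ → ℕ) : ℕ := ∑ i ∈ I ∩ Icc 1 (n-2), i * c i

lemma xi_apply (hn : 4 ≤ n) {I : Finset ℕ} (hI : I ⊆ Icc 1 n) (c : ℕ → ℕ) (j : Fin n) :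
    (∑ i ∈ I, c i • Hso n i) j =
      (∑ i ∈ I ∩ Icc ((j:ℕ)+1) (n-2), (c i : ℝ)) +
      (if (j:ℕ)+2 ≤ n then ((ec I c (n-1) : ℝ) + ec I c n)/2
        else ((ec I c n : ℝ) - ec I c (n-1))/2) := by
  have hsplit : I = (I ∩ Icc 1 (n-2)) ∪ (I ∩ {n-1, n}) := by
    ext x
    simp only [mem_union, mem_inter, mem_Icc, mem_insert, mem_singleton]
    constructor
    · intro hx
      have h := mem_Icc.mp (hI hx)
      by_cases hc : x ≤ n - 2
      · exact Or.inl ⟨hx, h.1, hc⟩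
      · exact Or.inr ⟨hx, by omega⟩
    · tauto
  have hdisj : Disjoint (I ∩ Icc 1 (n-2)) (I ∩ {n-1, n}) := by
    rw [Finset.disjoint_left]
    intro x hx hx'
    simp only [mem_inter, mem_Icc, mem_insert, mem_singleton] at hx hx'
    omega
  rw [Finset.sum_apply]
  conv_lhs => rw [hsplit]
  rw [Finset.sum_union hdisj]
  congr 1
  · -- low part
    rw [Finset.sum_congr rfl (g := fun i => if (j:ℕ)+1 ≤ i then (c i : ℝ) else 0)]
    · rw [← Finset.sum_filter]
      congr 1
      ext x
      simp only [mem_filter, mem_inter, mem_Icc]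
      constructor
      · rintro ⟨⟨hxI, _, h2⟩, h3⟩; exact ⟨hxI, h3, h2⟩
      · rintro ⟨hxI, h3, h2⟩; exact ⟨⟨hxI, by omega, h2⟩, h3⟩
    · intro i hi
      simp only [mem_inter, mem_Icc] at hi
      rw [Pi.smul_apply, hso_low hn hi.2.2]
      split <;> simp
  · -- high part
    have h1 : ∑ i ∈ I ∩ {n-1, n}, (c i • Hso n i) j
        = ∑ i ∈ ({n-1, n} : Finset ℕ), (ec I c i • Hso n i) j := by
      rw [Finset.sum_congr rfl (g := fun i => (ec I c i • Hso n i) j)]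
      · apply Finset.sum_subset inter_subset_right
        intro x hx hx'
        have : x ∉ I := fun h => hx' (mem_inter.mpr ⟨h, hx⟩)
        simp [ec, this]
      · intro i hi
        simp only [mem_inter] at hi
        simp [ec, hi.1]
    rw [h1, Finset.sum_pair (by omega : n - 1 ≠ n)]
    simp only [Pi.smul_apply, hso_nm1 hn, hso_n hn, nsmul_eq_mul]
    split <;> push_cast <;> ring

def Aint (n : ℕ) (I : Finset ℕ) (c : ℕ → ℕ) (j : ℕ) : ℤ :=
  if j + 2 ≤ n then (∑ i ∈ I ∩ Icc (j+1) (n-2), (c i : ℤ)) + ((ec I c (n-1) + ec I c n)/2 : ℕ)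
  else (ec I c n : ℤ) - ((ec I c (n-1) + ec I c n)/2 : ℕ)

lemma sum_T (hn : 4 ≤ n) (I : Finset ℕ) (c : ℕ → ℕ) :
    ∑ j ∈ range (n-1), ∑ i ∈ I ∩ Icc (j+1) (n-2), (c i : ℤ) = (S0 n I c : ℤ) := by
  rw [Finset.sum_comm' (t' := I ∩ Icc 1 (n-2)) (s' := fun i => range i)]
  · unfold S0
    push_cast
    apply Finset.sum_congr rfl
    intro i _
    rw [Finset.sum_const, card_range]
    push_cast; ring
  · intro j i
    simp only [mem_range, mem_inter, mem_Icc]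
    constructor
    · rintro ⟨h1, h2, h3, h4⟩; exact ⟨by omega, h2, by omega, h4⟩
    · rintro ⟨h1, h2, h3, h4⟩; exact ⟨by omega, h2, by omega, h4⟩

lemma sum_A (hn : 4 ≤ n) (I : Finset ℕ) (c : ℕ → ℕ) :
    ∑ j ∈ range n, Aint n I c j
      = (S0 n I c : ℤ) + ((n-2 : ℕ):ℤ) * (((ec I c (n-1) + ec I c n)/2 : ℕ):ℤ)
        + (ec I c n : ℤ) := by
  have hn1 : n = (n-1) + 1 := by omega
  rw [hn1, Finset.sum_range_succ, ← hn1]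
  have h1 : ∀ j ∈ range (n-1), Aint n I c j
      = (∑ i ∈ I ∩ Icc (j+1) (n-2), (c i : ℤ)) + (((ec I c (n-1) + ec I c n)/2 : ℕ):ℤ) := by
    intro j hj
    rw [mem_range] at hj
    rw [Aint, if_pos (by omega)]
  have h2 : Aint n I c (n-1) = (ec I c n : ℤ) - (((ec I c (n-1) + ec I c n)/2 : ℕ):ℤ) := by
    rw [Aint, if_neg (by omega)]
  rw [Finset.sum_congr rfl h1, h2, Finset.sum_add_distrib, sum_T hn, Finset.sum_const,
    card_range, nsmul_eq_mul]
  rw [Nat.cast_sub (by omega : 1 ≤ n), Nat.cast_sub (by omega : 2 ≤ n)]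
  push_cast
  ring

lemma parity_bridge (hn : 4 ≤ n) (hodd : Odd n) (S h v : ℕ) :
    Even ((S:ℤ) + ((n-2:ℕ):ℤ) * (h:ℤ) + (v:ℤ)) ↔ Even (S + h + v) := by
  obtain ⟨q, hq⟩ : ∃ q, n - 2 = 2*q+1 := by
    obtain ⟨t, ht⟩ := hodd; exact ⟨t-1, by omega⟩
  rw [hq]
  have hmul : ((2*q+1 : ℕ):ℤ) * (h:ℤ) = 2*((q:ℤ)*(h:ℤ)) + (h:ℤ) := by push_cast; ring
  rw [hmul, Int.even_iff, Nat.even_iff]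
  generalize (q:ℤ) * (h:ℤ) = w
  omega


lemma xi_eq_A (hn : 4 ≤ n) {I : Finset ℕ} (hI : I ⊆ Icc 1 n) (c : ℕ → ℕ)
    (hev : Even (ec I c (n-1) + ec I c n)) (j : Fin n) :
    (∑ i ∈ I, c i • Hso n i) j = (Aint n I c (j:ℕ) : ℝ) := by
  obtain ⟨k, hk⟩ := hev
  have hdiv : ((ec I c (n-1) + ec I c n)/2 : ℕ) = k := by omega
  have hk' : (ec I c (n-1) : ℝ) + ec I c n = 2 * k := by
    have : ((ec I c (n-1) + ec I c n : ℕ) : ℝ) = ((k + k : ℕ) : ℝ) := by rw [hk]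
    push_cast at this; linarith
  rw [xi_apply hn hI, Aint, hdiv]
  split
  · push_cast
    linarith
  · have hemp : I ∩ Icc ((j:ℕ)+1) (n-2) = ∅ := by
      rw [Icc_eq_empty (by omega), inter_empty]
    rw [hemp, Finset.sum_empty]
    push_cast
    linarith

def latP (n : ℕ) (I : Finset ℕ) (c : ℕ → ℕ) : Prop :=
  Even (ec I c (n-1) + ec I c n) ∧
  Even (S0 n I c + (ec I c (n-1) + ec I c n)/2 + ec I c n)

lemma mem_iff (hn : 4 ≤ n) (hodd : Odd n) {I : Finset ℕ} (hI : I ⊆ Icc 1 n) (c : ℕ → ℕ) :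
    (∑ i ∈ I, c i • Hso n i) ∈ JSpin n ↔ latP n I c := by
  constructor
  · rintro ⟨a, ha, hev⟩
    have hj0 : n - 2 < n := by omega
    set j0 : Fin n := ⟨n-2, hj0⟩ with hj0def
    have e0 := ha j0
    rw [xi_apply hn hI] at e0
    have hval : (j0 : ℕ) = n - 2 := rfl
    rw [hval] at e0
    rw [if_pos (by omega : n - 2 + 2 ≤ n)] at e0
    have hempty : I ∩ Icc (n-2+1) (n-2) = ∅ := by
      rw [Icc_eq_empty (by omega), inter_empty]
    rw [hempty, Finset.sum_empty] at e0
    have huv : (ec I c (n-1) : ℤ) + ec I c n = 2 * a j0 := by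
      have : (ec I c (n-1) : ℝ) + ec I c n = 2 * ((a j0 : ℤ) : ℝ) := by linarith
      exact_mod_cast this
    have hevuv : Even (ec I c (n-1) + ec I c n) := by
      have : (ec I c (n-1) + ec I c n : ℤ) = 2 * a j0 := by push_cast; linarith [huv]
      refine ⟨(2 * a j0).toNat / 2, ?_⟩
      omega
    refine ⟨hevuv, ?_⟩
    have hA := xi_eq_A hn hI c hevuv
    have hptw : ∀ j : Fin n, a j = Aint n I c (j:ℕ) := by
      intro j
      have := (ha j).symm.trans (hA j)
      exact_mod_cast this
    have hsum : ∑ j : Fin n, a j = ∑ j ∈ range n, Aint n I c j := by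
      rw [Finset.sum_congr rfl (fun j _ => hptw j)]
      exact Fin.sum_univ_eq_sum_range _ n
    rw [hsum, sum_A hn] at hev
    exact (parity_bridge hn hodd _ _ _).mp hev
  · rintro ⟨h1, h2⟩
    refine ⟨fun j => Aint n I c (j:ℕ), xi_eq_A hn hI c h1, ?_⟩
    have hsum : ∑ j : Fin n, Aint n I c (j:ℕ) = ∑ j ∈ range n, Aint n I c j :=
      Fin.sum_univ_eq_sum_range _ n
    rw [hsum, sum_A hn]
    exact (parity_bridge hn hodd _ _ _).mpr h2

lemma xi_inj (hn : 4 ≤ n) {I : Finset ℕ} (hI : I ⊆ Icc 1 n) {c c' : ℕ → ℕ}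
    (h : (∑ i ∈ I, c i • Hso n i) = ∑ i ∈ I, c' i • Hso n i) :
    ∀ i ∈ I, c i = c' i := by
  -- first: recover u+v and v-u from coordinates n-2 and n-1
  have hj0 : n - 2 < n := by omega
  have hj1 : n - 1 < n := by omega
  have e0 := congrFun h ⟨n-2, hj0⟩
  have e1 := congrFun h ⟨n-1, hj1⟩
  rw [xi_apply hn hI c, xi_apply hn hI c'] at e0 e1
  have hv0 : ((⟨n-2, hj0⟩ : Fin n) : ℕ) = n - 2 := rfl
  have hv1 : ((⟨n-1, hj1⟩ : Fin n) : ℕ) = n - 1 := rfl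
  simp only [hv0, if_pos (by omega : n-2+2 ≤ n),
    show I ∩ Icc (n-2+1) (n-2) = ∅ by rw [Icc_eq_empty (by omega), inter_empty],
    Finset.sum_empty] at e0
  simp only [hv1, if_neg (by omega : ¬ (n-1+2 ≤ n)),
    show I ∩ Icc (n-1+1) (n-2) = ∅ by rw [Icc_eq_empty (by omega), inter_empty],
    Finset.sum_empty] at e1
  have hu : (ec I c (n-1) : ℝ) = ec I c' (n-1) := by linarith
  have hv : (ec I c n : ℝ) = ec I c' n := by linarith
  intro i hi
  have hin := mem_Icc.mp (hI hi)
  rcases show i ≤ n - 2 ∨ i = n - 1 ∨ i = n by omega with hc | hc | hc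
  · -- low index: use coordinates i-1 and i
    have hk0 : i - 1 < n := by omega
    have hk1 : i < n := by omega
    have f0 := congrFun h ⟨i-1, hk0⟩
    have f1 := congrFun h ⟨i, hk1⟩
    rw [xi_apply hn hI c, xi_apply hn hI c'] at f0 f1
    have hw0 : ((⟨i-1, hk0⟩ : Fin n) : ℕ) = i - 1 := rfl
    have hw1 : ((⟨i, hk1⟩ : Fin n) : ℕ) = i := rfl
    simp only [hw0, if_pos (by omega : i-1+2 ≤ n)] at f0
    simp only [hw1, if_pos (by omega : i+2 ≤ n)] at f1
    have hins : ∀ d : ℕ → ℕ, ∑ x ∈ I ∩ Icc (i-1+1) (n-2), (d x : ℝ)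
        = d i + ∑ x ∈ I ∩ Icc (i+1) (n-2), (d x : ℝ) := by
      intro d
      have hset : I ∩ Icc (i-1+1) (n-2) = insert i (I ∩ Icc (i+1) (n-2)) := by
        ext x
        simp only [mem_insert, mem_inter, mem_Icc]
        constructor
        · rintro ⟨hxI, hx1, hx2⟩
          rcases eq_or_ne x i with rfl | hne
          · exact Or.inl rfl
          · exact Or.inr ⟨hxI, by omega, hx2⟩
        · rintro (rfl | ⟨hxI, hx1, hx2⟩)
          · exact ⟨hi, by omega, hc⟩
          · exact ⟨hxI, by omega, hx2⟩
      rw [hset, Finset.sum_insert (by simp only [mem_inter, mem_Icc]; omega)]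
    rw [hins c, hins c'] at f0
    have : (c i : ℝ) = c' i := by linarith
    exact_mod_cast this
  · have h1 : ec I c (n-1) = c i := by rw [← hc]; simp [ec, hi]
    have h2 : ec I c' (n-1) = c' i := by rw [← hc]; simp [ec, hi]
    have h3 := hu
    rw [h1, h2] at h3
    exact_mod_cast h3
  · have h1 : ec I c n = c i := by rw [← hc]; simp [ec, hi]
    have h2 : ec I c' n = c' i := by rw [← hc]; simp [ec, hi]
    have h3 := hv
    rw [h1, h2] at h3
    exact_mod_cast h3

/-- minimality predicate (arithmetic form) -/
def MinP (n : ℕ) (I : Finset ℕ) (c : ℕ → ℕ) : Prop :=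
  (∀ i ∈ I, 1 ≤ c i) ∧ latP n I c ∧
    ∀ c' : ℕ → ℕ, (∀ i ∈ I, 1 ≤ c' i ∧ c' i ≤ c i) → latP n I c' → ∀ i ∈ I, c' i = c i

lemma latP_A {I : Finset ℕ} (h1 : n-1 ∉ I) (h2 : n ∉ I) (c : ℕ → ℕ) :
    latP n I c ↔ Even (S0 n I c) := by
  simp [latP, ec, h1, h2]

lemma S0_shape {I : Finset ℕ} (c : ℕ → ℕ) (b j : ℕ)
    (hc : ∀ i ∈ I ∩ Icc 1 (n-2), c i = if i = j then 1 + b else 1) :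
    S0 n I c = (∑ i ∈ I ∩ Icc 1 (n-2), i) + (if j ∈ I ∩ Icc 1 (n-2) then j * b else 0) := by
  unfold S0
  rw [Finset.sum_congr rfl (fun i hi => by rw [hc i hi])]
  have h : ∀ i ∈ I ∩ Icc 1 (n-2), i * (if i = j then 1 + b else 1)
      = i + (if i = j then i * b else 0) := by
    intro i _
    split <;> ring
  rw [Finset.sum_congr rfl h, Finset.sum_add_distrib, Finset.sum_ite_eq' _ j (fun i => i * b)]

lemma S0_ones {I : Finset ℕ} (c : ℕ → ℕ) (hc : ∀ i ∈ I ∩ Icc 1 (n-2), c i = 1) :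
    S0 n I c = ∑ i ∈ I ∩ Icc 1 (n-2), i := by
  unfold S0
  rw [Finset.sum_congr rfl (fun i hi => by rw [hc i hi, mul_one])]

lemma S0_update {I : Finset ℕ} (c : ℕ → ℕ) {k : ℕ} (m : ℕ) (hk : k ∈ I ∩ Icc 1 (n-2)) :
    S0 n I (Function.update c k m) + k * c k = S0 n I c + k * m := by
  unfold S0
  rw [← Finset.sum_erase_add _ _ hk, ← Finset.sum_erase_add _ (fun i => i * c i) hk]
  have h : ∀ i ∈ (I ∩ Icc 1 (n-2)).erase k,
      i * (Function.update c k m i) = i * c i := by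
    intro i hi
    rw [Function.update_of_ne (mem_erase.mp hi).1]
  rw [Finset.sum_congr rfl h, Function.update_self]
  ring

lemma ec_update_low {I : Finset ℕ} (c : ℕ → ℕ) {k : ℕ} (m : ℕ) (hk2 : k ≤ n-2) (hn : 4 ≤ n)
    (t : ℕ) (ht : t = n-1 ∨ t = n) : ec I (Function.update c k m) t = ec I c t := by
  have : t ≠ k := by omega
  unfold ec
  rw [Function.update_of_ne this]

lemma latP_low_parity {I : Finset ℕ} (c c' : ℕ → ℕ)
    (hec1 : ec I c' (n-1) = ec I c (n-1)) (hec2 : ec I c' n = ec I c n)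
    (hS : S0 n I c' % 2 = S0 n I c % 2) :
    latP n I c' ↔ latP n I c := by
  unfold latP
  rw [hec1, hec2]
  have : Even (S0 n I c' + (ec I c (n-1) + ec I c n)/2 + ec I c n)
      ↔ Even (S0 n I c + (ec I c (n-1) + ec I c n)/2 + ec I c n) := by
    rw [Nat.even_iff, Nat.even_iff]
    omega
  rw [this]

lemma latP_update_low (hn : 4 ≤ n) {I : Finset ℕ} (c : ℕ → ℕ) {k : ℕ} (m : ℕ)
    (hk : k ∈ I ∩ Icc 1 (n-2)) (hpar : (k * m) % 2 = (k * c k) % 2) :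
    latP n I (Function.update c k m) ↔ latP n I c := by
  have hk2 : k ≤ n - 2 := (mem_Icc.mp (mem_inter.mp hk).2).2
  have hS := S0_update c m hk
  exact latP_low_parity c _ (ec_update_low c m hk2 hn (n-1) (Or.inl rfl))
    (ec_update_low c m hk2 hn n (Or.inr rfl)) (by omega)

/-- bounds for a single update downwards -/
lemma update_bounds {I : Finset ℕ} (c : ℕ → ℕ) {k m : ℕ} (hb : ∀ i ∈ I, 1 ≤ c i)
    (hm1 : 1 ≤ m) (hm2 : m ≤ c k) :
    ∀ i ∈ I, 1 ≤ Function.update c k m i ∧ Function.update c k m i ≤ c i := by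
  intro i hi
  rcases eq_or_ne i k with rfl | hne
  · rw [Function.update_self]; exact ⟨hm1, hm2⟩
  · rw [Function.update_of_ne hne]; exact ⟨hb i hi, le_refl _⟩

section ComboA

variable {I : Finset ℕ}

lemma I_low (hn : 4 ≤ n) (hI : I ⊆ Icc 1 n) (h1 : n-1 ∉ I) (h2 : n ∉ I) :
    ∀ i ∈ I, 1 ≤ i ∧ i ≤ n-2 := by
  intro i hi
  have hm := mem_Icc.mp (hI hi)
  have hne1 : i ≠ n-1 := fun h => h1 (h ▸ hi)
  have hne2 : i ≠ n := fun h => h2 (h ▸ hi)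
  omega

lemma classifyA_even (hn : 4 ≤ n) (hI : I ⊆ Icc 1 n) (h1 : n-1 ∉ I) (h2 : n ∉ I)
    (hSig : Even (∑ i ∈ I ∩ Icc 1 (n-2), i)) (c : ℕ → ℕ) :
    MinP n I c ↔ ∀ i ∈ I, c i = 1 := by
  constructor
  · rintro ⟨hb, _, hmin⟩
    intro i hi
    exact (hmin (fun _ => 1) (fun i hi => ⟨le_refl _, hb i hi⟩)
      ((latP_A h1 h2 _).mpr (by rw [S0_ones _ (fun _ _ => rfl)]; exact hSig)) i hi).symm
  · intro hc
    refine ⟨fun i hi => (hc i hi).symm ▸ le_refl 1, ?_, ?_⟩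
    · exact (latP_A h1 h2 _).mpr
        (by rw [S0_ones _ (fun i hi => hc i (mem_inter.mp hi).1)]; exact hSig)
    · intro c' hbnd _ i hi
      have := hbnd i hi
      have := hc i hi
      omega

lemma classifyA_odd (hn : 4 ≤ n) (hI : I ⊆ Icc 1 n) (h1 : n-1 ∉ I) (h2 : n ∉ I)
    (hSig : Odd (∑ i ∈ I ∩ Icc 1 (n-2), i)) (c : ℕ → ℕ) :
    MinP n I c ↔ ∃ j, j ∈ I ∧ Odd j ∧ ∀ i ∈ I, c i = if i = j then 2 else 1 := by
  have hlow := I_low hn hI h1 h2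
  have hmemI0 : ∀ i ∈ I, i ∈ I ∩ Icc 1 (n-2) := by
    intro i hi
    exact mem_inter.mpr ⟨hi, mem_Icc.mpr (hlow i hi)⟩
  constructor
  · rintro ⟨hb, hlat, hmin⟩
    rw [latP_A h1 h2] at hlat
    -- all coefficients at most 2
    have hub : ∀ k ∈ I, c k ≤ 2 := by
      intro k hk
      by_contra hgt
      push_neg at hgt
      have hkm := hmemI0 k hk
      have hpar : (k * (c k - 2)) % 2 = (k * c k) % 2 := by
        have h' : k * c k = k * (c k - 2 + 2) := by rw [Nat.sub_add_cancel (by omega)]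
        rw [Nat.mul_add] at h'
        omega
      have hlat' : latP n I (Function.update c k (c k - 2)) :=
        (latP_update_low hn c (c k - 2) hkm hpar).mpr ((latP_A h1 h2 c).mpr hlat)
      have := hmin _ (update_bounds c hb (by omega) (by omega)) hlat' k hk
      rw [Function.update_self] at this
      omega
    -- even indices have coefficient 1
    have heven1 : ∀ k ∈ I, Even k → c k = 1 := by
      intro k hk hke
      by_contra hne
      have hck : c k = 2 := by have := hb k hk; have := hub k hk; omega
      have hkm := hmemI0 k hk
      obtain ⟨t, ht⟩ := hke
      have hpar : (k * 1) % 2 = (k * c k) % 2 := by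
        have e1 : k * 1 = t + t := by omega
        have e2 : k * c k = 2 * (t * c k) := by rw [ht]; ring
        omega
      have hlat' : latP n I (Function.update c k 1) :=
        (latP_update_low hn c 1 hkm hpar).mpr ((latP_A h1 h2 c).mpr hlat)
      have := hmin _ (update_bounds c hb (le_refl 1) (hb k hk)) hlat' k hk
      rw [Function.update_self] at this
      omega
    -- existence of a bump
    have hex : ∃ j ∈ I, c j = 2 := by
      by_contra h
      push_neg at h
      have hall : ∀ i ∈ I ∩ Icc 1 (n-2), c i = 1 := by
        intro i hi
        have hiI := (mem_inter.mp hi).1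
        have := hb i hiI; have := hub i hiI; have := h i hiI
        omega
      rw [S0_ones c hall] at hlat
      exact (Nat.not_even_iff_odd.mpr hSig) hlat
    obtain ⟨j, hj, hcj⟩ := hex
    have hjodd : Odd j := by
      by_contra h
      rw [Nat.not_odd_iff_even] at h
      have := heven1 j hj h
      omega
    refine ⟨j, hj, hjodd, ?_⟩
    intro i hi
    rcases eq_or_ne i j with rfl | hij
    · rw [if_pos rfl]; exact hcj
    · rw [if_neg hij]
      by_contra hne
      have hci : c i = 2 := by have := hb i hi; have := hub i hi; omega
      have hiodd : Odd i := by
        by_contra h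
        rw [Nat.not_odd_iff_even] at h
        have := heven1 i hi h
        omega
      -- reduce both bumps
      have hc1j : Function.update c i 1 j = c j := Function.update_of_ne (Ne.symm hij) _ _
      have hS1 := S0_update c 1 (hmemI0 i hi)
      have hS2 := S0_update (Function.update c i 1) 1 (hmemI0 j hj)
      have hlat2 : latP n I (Function.update (Function.update c i 1) j 1) := by
        refine (latP_low_parity c _ ?_ ?_ ?_).mpr ((latP_A h1 h2 c).mpr hlat)
        · rw [ec_update_low (Function.update c i 1) 1 (hlow j hj).2 hn (n-1) (Or.inl rfl),
            ec_update_low c 1 (hlow i hi).2 hn (n-1) (Or.inl rfl)]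
        · rw [ec_update_low (Function.update c i 1) 1 (hlow j hj).2 hn n (Or.inr rfl),
            ec_update_low c 1 (hlow i hi).2 hn n (Or.inr rfl)]
        · have e1 : i * c i = 2 * i := by rw [hci]; ring
          have e2 : j * Function.update c i 1 j = 2 * j := by rw [hc1j, hcj]; ring
          have e3 : i * 1 = i := by ring
          have e4 : j * 1 = j := by ring
          obtain ⟨a, ha⟩ := hiodd
          obtain ⟨b, hb'⟩ := hjodd
          omega
      have hbnd : ∀ t ∈ I, 1 ≤ Function.update (Function.update c i 1) j 1 t ∧
          Function.update (Function.update c i 1) j 1 t ≤ c t := by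
        intro t ht
        rcases eq_or_ne t j with rfl | htj
        · rw [Function.update_self]
          exact ⟨le_refl _, hb t ht⟩
        · rw [Function.update_of_ne htj]
          rcases eq_or_ne t i with rfl | hti
          · rw [Function.update_self]
            exact ⟨le_refl _, hb t ht⟩
          · rw [Function.update_of_ne hti]
            exact ⟨hb t ht, le_refl _⟩
      have := hmin _ hbnd hlat2 j hj
      rw [Function.update_self] at this
      omega
  · rintro ⟨j, hj, hjodd, hc⟩
    have hj1 : 1 ≤ j := hjodd.pos
    have hjm : j ∈ I ∩ Icc 1 (n-2) := hmemI0 j hj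
    have hcI0 : ∀ i ∈ I ∩ Icc 1 (n-2), c i = if i = j then 1 + 1 else 1 := by
      intro i hi
      rw [hc i (mem_inter.mp hi).1]
    have hS0 : S0 n I c = (∑ i ∈ I ∩ Icc 1 (n-2), i) + j := by
      rw [S0_shape c 1 j hcI0, if_pos hjm, mul_one]
    refine ⟨?_, ?_, ?_⟩
    · intro i hi; rw [hc i hi]; split <;> omega
    · rw [latP_A h1 h2, hS0]
      exact hSig.add_odd hjodd
    · intro c' hbnd hlat' i hi
      rw [latP_A h1 h2] at hlat'
      have hones : ∀ t ∈ I, t ≠ j → c' t = 1 := by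
        intro t ht htj
        have h1' := hbnd t ht
        have h2' := hc t ht
        rw [if_neg htj] at h2'
        omega
      have hcj' : c' j = 2 := by
        have h1' := hbnd j hj
        have h2' := hc j hj
        rw [if_pos rfl] at h2'
        rcases show c' j = 1 ∨ c' j = 2 by omega with h | h
        · exfalso
          have hall : ∀ t ∈ I ∩ Icc 1 (n-2), c' t = 1 := by
            intro t htm
            have htI := (mem_inter.mp htm).1
            rcases eq_or_ne t j with rfl | htj
            · exact h
            · exact hones t htI htj
          rw [S0_ones c' hall] at hlat'
          exact (Nat.not_even_iff_odd.mpr hSig) hlat'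
        · exact h
      rcases eq_or_ne i j with rfl | hij
      · rw [hcj', hc i hi, if_pos rfl]
      · rw [hones i hi hij, hc i hi, if_neg hij]

end ComboA

section LowLemmas

variable {I : Finset ℕ} {c : ℕ → ℕ}

lemma low_le_two (hn : 4 ≤ n) (hI : I ⊆ Icc 1 n) (hb : ∀ i ∈ I, 1 ≤ c i) (hlat : latP n I c)
    (hmin : ∀ c', (∀ i ∈ I, 1 ≤ c' i ∧ c' i ≤ c i) → latP n I c' → ∀ i ∈ I, c' i = c i) :
    ∀ k ∈ I, k ≤ n-2 → c k ≤ 2 := by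
  intro k hk hk2
  by_contra hgt
  push_neg at hgt
  have hk1 : 1 ≤ k := (mem_Icc.mp (hI hk)).1
  have hkm : k ∈ I ∩ Icc 1 (n-2) := mem_inter.mpr ⟨hk, mem_Icc.mpr ⟨hk1, hk2⟩⟩
  have hS := S0_update c (c k - 2) hkm
  have hmul : k * c k = k * (c k - 2) + 2 * k := by
    have h' : k * c k = k * (c k - 2 + 2) := by rw [Nat.sub_add_cancel (by omega)]
    rw [Nat.mul_add] at h'
    omega
  have hlat' : latP n I (Function.update c k (c k - 2)) := by
    refine (latP_low_parity c _ (ec_update_low c _ hk2 hn (n-1) (Or.inl rfl))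
      (ec_update_low c _ hk2 hn n (Or.inr rfl)) (by omega)).mpr hlat
  have := hmin _ (update_bounds c hb (by omega) (by omega)) hlat' k hk
  rw [Function.update_self] at this
  omega

lemma low_even_one (hn : 4 ≤ n) (hI : I ⊆ Icc 1 n) (hb : ∀ i ∈ I, 1 ≤ c i) (hlat : latP n I c)
    (hmin : ∀ c', (∀ i ∈ I, 1 ≤ c' i ∧ c' i ≤ c i) → latP n I c' → ∀ i ∈ I, c' i = c i) :
    ∀ k ∈ I, k ≤ n-2 → Even k → c k = 1 := by
  intro k hk hk2 hke
  by_contra hne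
  have hck : 2 ≤ c k := by have := hb k hk; omega
  have hk1 : 1 ≤ k := (mem_Icc.mp (hI hk)).1
  have hkm : k ∈ I ∩ Icc 1 (n-2) := mem_inter.mpr ⟨hk, mem_Icc.mpr ⟨hk1, hk2⟩⟩
  have hS := S0_update c 1 hkm
  obtain ⟨t, ht⟩ := hke
  have e1 : k * 1 = t + t := by omega
  have e2 : k * c k = 2 * (t * c k) := by rw [ht]; ring
  have hlat' : latP n I (Function.update c k 1) := by
    refine (latP_low_parity c _ (ec_update_low c _ hk2 hn (n-1) (Or.inl rfl))
      (ec_update_low c _ hk2 hn n (Or.inr rfl)) (by omega)).mpr hlat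
  have := hmin _ (update_bounds c hb (le_refl 1) (hb k hk)) hlat' k hk
  rw [Function.update_self] at this
  omega

lemma low_bump_unique (hn : 4 ≤ n) (hI : I ⊆ Icc 1 n) (hb : ∀ i ∈ I, 1 ≤ c i)
    (hlat : latP n I c)
    (hmin : ∀ c', (∀ i ∈ I, 1 ≤ c' i ∧ c' i ≤ c i) → latP n I c' → ∀ i ∈ I, c' i = c i) :
    ∀ k ∈ I, k ≤ n-2 → c k = 2 → ∀ l ∈ I, l ≤ n-2 → c l = 2 → k = l := by
  intro k hk hk2 hck l hl hl2 hcl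
  by_contra hkl
  have hkodd : Odd k := by
    by_contra h
    rw [Nat.not_odd_iff_even] at h
    have := low_even_one hn hI hb hlat hmin k hk hk2 h
    omega
  have hlodd : Odd l := by
    by_contra h
    rw [Nat.not_odd_iff_even] at h
    have := low_even_one hn hI hb hlat hmin l hl hl2 h
    omega
  have hk1 : 1 ≤ k := (mem_Icc.mp (hI hk)).1
  have hl1 : 1 ≤ l := (mem_Icc.mp (hI hl)).1
  have hkm : k ∈ I ∩ Icc 1 (n-2) := mem_inter.mpr ⟨hk, mem_Icc.mpr ⟨hk1, hk2⟩⟩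
  have hlm : l ∈ I ∩ Icc 1 (n-2) := mem_inter.mpr ⟨hl, mem_Icc.mpr ⟨hl1, hl2⟩⟩
  have hulj : Function.update c k 1 l = c l := Function.update_of_ne (fun h => hkl h.symm) _ _
  have hS1 := S0_update c 1 hkm
  have hS2 := S0_update (Function.update c k 1) 1 hlm
  have hlat2 : latP n I (Function.update (Function.update c k 1) l 1) := by
    refine (latP_low_parity c _ ?_ ?_ ?_).mpr hlat
    · rw [ec_update_low (Function.update c k 1) 1 hl2 hn (n-1) (Or.inl rfl),
        ec_update_low c 1 hk2 hn (n-1) (Or.inl rfl)]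
    · rw [ec_update_low (Function.update c k 1) 1 hl2 hn n (Or.inr rfl),
        ec_update_low c 1 hk2 hn n (Or.inr rfl)]
    · have e1 : k * c k = 2 * k := by rw [hck]; ring
      have e2 : l * Function.update c k 1 l = 2 * l := by rw [hulj, hcl]; ring
      have e3 : k * 1 = k := by ring
      have e4 : l * 1 = l := by ring
      obtain ⟨a, ha⟩ := hkodd
      obtain ⟨b, hbb⟩ := hlodd
      omega
  have hbnd : ∀ t ∈ I, 1 ≤ Function.update (Function.update c k 1) l 1 t ∧
      Function.update (Function.update c k 1) l 1 t ≤ c t := by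
    intro t ht
    rcases eq_or_ne t l with rfl | htl
    · rw [Function.update_self]; exact ⟨le_refl _, hb t ht⟩
    · rw [Function.update_of_ne htl]
      rcases eq_or_ne t k with rfl | htk
      · rw [Function.update_self]; exact ⟨le_refl _, hb t ht⟩
      · rw [Function.update_of_ne htk]; exact ⟨hb t ht, le_refl _⟩
  have := hmin _ hbnd hlat2 l hl
  rw [Function.update_self] at this
  omega

end LowLemmas

section ComboB

variable {I : Finset ℕ} {s : ℕ}

def BCond (n : ℕ) (I : Finset ℕ) (s : ℕ) : Prop :=
  (s = n-1 ∧ n-1 ∈ I ∧ n ∉ I) ∨ (s = n ∧ n ∈ I ∧ n-1 ∉ I)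

lemma BCond.sI (h : BCond n I s) : s ∈ I := by
  rcases h with ⟨hseq, h1, _⟩ | ⟨hseq, h1, _⟩ <;> (rw [hseq]; exact h1)

lemma BCond.slow (hn : 4 ≤ n) (h : BCond n I s) (hI : I ⊆ Icc 1 n) :
    ∀ i ∈ I, i ≠ s → i ≤ n-2 := by
  intro i hi his
  have hm := mem_Icc.mp (hI hi)
  rcases h with ⟨hseq, h1, h2⟩ | ⟨hseq, h1, h2⟩
  · have : i ≠ n := fun h => h2 (h ▸ hi)
    omega
  · have : i ≠ n-1 := fun h => h2 (h ▸ hi)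
    omega

lemma BCond.shigh (hn : 4 ≤ n) (h : BCond n I s) : ¬ (s ≤ n-2) := by
  rcases h with ⟨hseq, _, _⟩ | ⟨hseq, _, _⟩ <;> omega

lemma latP_B (hsor : BCond n I s) (c : ℕ → ℕ) :
    latP n I c ↔ Even (c s) ∧ Even (S0 n I c + c s / 2) := by
  rcases hsor with ⟨hseq, hin, hout⟩ | ⟨hseq, hin, hout⟩
  · subst hseq
    unfold latP ec
    simp only [if_pos hin, if_neg hout, add_zero]
  · rw [hseq]
    unfold latP ec
    simp only [if_pos hin, if_neg hout, zero_add]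
    constructor
    · rintro ⟨h1, h2⟩
      refine ⟨h1, ?_⟩
      obtain ⟨t, ht⟩ := h1
      rw [Nat.even_iff] at h2 ⊢
      omega
    · rintro ⟨h1, h2⟩
      refine ⟨h1, ?_⟩
      obtain ⟨t, ht⟩ := h1
      rw [Nat.even_iff] at h2 ⊢
      omega

lemma S0_update_high {c : ℕ → ℕ} (m : ℕ) (hs : ¬ (s ≤ n-2)) :
    S0 n I (Function.update c s m) = S0 n I c := by
  unfold S0
  refine Finset.sum_congr rfl (fun i hi => ?_)
  have := mem_Icc.mp (mem_inter.mp hi).2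
  rw [Function.update_of_ne (by omega)]

lemma cs_two_or_four (hn : 4 ≤ n) (hI : I ⊆ Icc 1 n) (hsor : BCond n I s) {c : ℕ → ℕ}
    (hb : ∀ i ∈ I, 1 ≤ c i) (hlat : latP n I c)
    (hmin : ∀ c', (∀ i ∈ I, 1 ≤ c' i ∧ c' i ≤ c i) → latP n I c' → ∀ i ∈ I, c' i = c i) :
    c s = 2 ∨ c s = 4 := by
  obtain ⟨hevs, hpar⟩ := (latP_B hsor c).mp hlat
  have h1 : 1 ≤ c s := hb s hsor.sI
  by_contra h
  push_neg at h
  have h6 : 6 ≤ c s := by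
    obtain ⟨t, ht⟩ := hevs
    omega
  have hlat' : latP n I (Function.update c s (c s - 4)) := by
    rw [latP_B hsor, Function.update_self, S0_update_high _ (hsor.shigh hn)]
    obtain ⟨t, ht⟩ := hevs
    constructor
    · rw [Nat.even_iff]; omega
    · rw [Nat.even_iff]
      rw [Nat.even_iff] at hpar
      omega
  have := hmin _ (update_bounds c hb (by omega) (by omega)) hlat' s hsor.sI
  rw [Function.update_self] at this
  omega

lemma classifyB_even (hn : 4 ≤ n) (hI : I ⊆ Icc 1 n) (hsor : BCond n I s)
    (hSig : Even (∑ i ∈ I ∩ Icc 1 (n-2), i)) (c : ℕ → ℕ) :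
    MinP n I c ↔ ((∀ i ∈ I, c i = if i = s then 4 else 1) ∨
      (∃ j, j ∈ I ∧ j ≤ n-2 ∧ Odd j ∧
        ∀ i ∈ I, c i = if i = s then 2 else if i = j then 2 else 1)) := by
  have hsI := hsor.sI
  have hslow := hsor.slow hn hI
  have hshigh := hsor.shigh hn
  constructor
  · rintro ⟨hb, hlat, hmin⟩
    obtain ⟨hevs, hpar⟩ := (latP_B hsor c).mp hlat
    have hub := low_le_two hn hI hb hlat hmin
    have hev1 := low_even_one hn hI hb hlat hmin
    have huniq := low_bump_unique hn hI hb hlat hmin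
    rcases cs_two_or_four hn hI hsor hb hlat hmin with hcs | hcs
    · right
      have hS0odd : Odd (S0 n I c) := by
        have hd : c s / 2 = 1 := by omega
        rw [hd, Nat.even_iff] at hpar
        rw [Nat.odd_iff]
        omega
      have hex : ∃ j ∈ I, j ≠ s ∧ c j = 2 := by
        by_contra h
        push_neg at h
        have hall : ∀ i ∈ I ∩ Icc 1 (n-2), c i = 1 := by
          intro i hi
          obtain ⟨hiI, hiIcc⟩ := mem_inter.mp hi
          have hi2 := (mem_Icc.mp hiIcc).2
          have his : i ≠ s := by omega
          have := h i hiI his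
          have := hb i hiI
          have := hub i hiI hi2
          omega
        rw [S0_ones c hall] at hS0odd
        exact (Nat.not_odd_iff_even.mpr hSig) hS0odd
      obtain ⟨j, hj, hjs, hcj⟩ := hex
      have hjlow : j ≤ n-2 := hslow j hj hjs
      have hjodd : Odd j := by
        by_contra h
        rw [Nat.not_odd_iff_even] at h
        have := hev1 j hj hjlow h
        omega
      refine ⟨j, hj, hjlow, hjodd, ?_⟩
      intro i hi
      rcases eq_or_ne i s with rfl | his
      · rw [if_pos rfl]; exact hcs
      · rw [if_neg his]
        have hilow := hslow i hi his
        rcases eq_or_ne i j with rfl | hij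
        · rw [if_pos rfl]; exact hcj
        · rw [if_neg hij]
          by_contra hne
          have hci : c i = 2 := by have := hb i hi; have := hub i hi hilow; omega
          exact hij (huniq i hi hilow hci j hj hjlow hcj)
    · left
      have hallone : ∀ i ∈ I, i ≠ s → c i = 1 := by
        intro i hi his
        have hilow := hslow i hi his
        by_contra hne
        have hci : c i = 2 := by have := hb i hi; have := hub i hi hilow; omega
        have hiodd : Odd i := by
          by_contra h
          rw [Nat.not_odd_iff_even] at h
          have := hev1 i hi hilow h
          omega
        have hi1 : 1 ≤ i := (mem_Icc.mp (hI hi)).1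
        have him : i ∈ I ∩ Icc 1 (n-2) := mem_inter.mpr ⟨hi, mem_Icc.mpr ⟨hi1, hilow⟩⟩
        have hS1 := S0_update c 1 him
        have hlat' : latP n I (Function.update (Function.update c i 1) s 2) := by
          rw [latP_B hsor, Function.update_self, S0_update_high _ hshigh]
          refine ⟨by decide, ?_⟩
          rw [Nat.even_iff]
          have hd : c s / 2 = 2 := by omega
          rw [hd, Nat.even_iff] at hpar
          have e1 : i * c i = 2 * i := by rw [hci]; ring
          have e2 : i * 1 = i := by ring
          obtain ⟨a, ha⟩ := hiodd
          omega
        have hbnd : ∀ t ∈ I, 1 ≤ Function.update (Function.update c i 1) s 2 t ∧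
            Function.update (Function.update c i 1) s 2 t ≤ c t := by
          intro t ht
          rcases eq_or_ne t s with rfl | hts
          · rw [Function.update_self]
            constructor
            · omega
            · omega
          · rw [Function.update_of_ne hts]
            rcases eq_or_ne t i with rfl | hti
            · rw [Function.update_self]
              exact ⟨le_refl _, hb t ht⟩
            · rw [Function.update_of_ne hti]
              exact ⟨hb t ht, le_refl _⟩
        have := hmin _ hbnd hlat' s hsI
        rw [Function.update_self] at this
        omega
      intro i hi
      rcases eq_or_ne i s with rfl | his
      · rw [if_pos rfl]; exact hcs
      · rw [if_neg his]; exact hallone i hi his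
  · rintro (hshape | ⟨j, hj, hjlow, hjodd, hshape⟩)
    · have hS0 : S0 n I c = ∑ i ∈ I ∩ Icc 1 (n-2), i := by
        refine S0_ones c (fun i hi => ?_)
        have := mem_Icc.mp (mem_inter.mp hi).2
        rw [hshape i (mem_inter.mp hi).1, if_neg (by omega)]
      have hcs : c s = 4 := by rw [hshape s hsI, if_pos rfl]
      refine ⟨fun i hi => by rw [hshape i hi]; split <;> omega, ?_, ?_⟩
      · rw [latP_B hsor, hS0, hcs]
        refine ⟨by decide, ?_⟩
        obtain ⟨t, ht⟩ := hSig
        rw [Nat.even_iff]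
        omega
      · intro c' hbnd hlat'
        obtain ⟨hevs', hpar'⟩ := (latP_B hsor c').mp hlat'
        have hones : ∀ t ∈ I, t ≠ s → c' t = 1 := by
          intro t ht hts
          have := hbnd t ht
          have := hshape t ht
          rw [if_neg hts] at this
          omega
        have hS0' : S0 n I c' = ∑ i ∈ I ∩ Icc 1 (n-2), i := by
          refine S0_ones c' (fun i hi => ?_)
          have := mem_Icc.mp (mem_inter.mp hi).2
          exact hones i (mem_inter.mp hi).1 (by omega)
        have hcs' : c' s = 4 := by
          have h1 := hbnd s hsI
          rw [hcs] at h1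
          obtain ⟨t, ht⟩ := hevs'
          rcases show c' s = 2 ∨ c' s = 4 by omega with h | h
          · exfalso
            rw [hS0'] at hpar'
            have hd : c' s / 2 = 1 := by omega
            rw [hd, Nat.even_iff] at hpar'
            obtain ⟨u, hu⟩ := hSig
            omega
          · exact h
        intro i hi
        rcases eq_or_ne i s with rfl | his
        · rw [hcs', hcs]
        · rw [hones i hi his, hshape i hi, if_neg his]
    · have hjs : j ≠ s := by omega
      have hj1 : 1 ≤ j := hjodd.pos
      have hjm : j ∈ I ∩ Icc 1 (n-2) := mem_inter.mpr ⟨hj, mem_Icc.mpr ⟨hj1, hjlow⟩⟩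
      have hlowshape : ∀ i ∈ I ∩ Icc 1 (n-2), c i = if i = j then 1 + 1 else 1 := by
        intro i hi
        have := mem_Icc.mp (mem_inter.mp hi).2
        rw [hshape i (mem_inter.mp hi).1, if_neg (by omega)]
      have hS0 : S0 n I c = (∑ i ∈ I ∩ Icc 1 (n-2), i) + j := by
        rw [S0_shape c 1 j hlowshape, if_pos hjm, mul_one]
      have hcs : c s = 2 := by rw [hshape s hsI, if_pos rfl]
      have hcj : c j = 2 := by rw [hshape j hj, if_neg hjs, if_pos rfl]
      refine ⟨fun i hi => by rw [hshape i hi]; split <;> [omega; (split <;> omega)], ?_, ?_⟩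
      · rw [latP_B hsor, hS0, hcs]
        refine ⟨by decide, ?_⟩
        obtain ⟨t, ht⟩ := hSig
        obtain ⟨a, ha⟩ := hjodd
        rw [Nat.even_iff]
        omega
      · intro c' hbnd hlat'
        obtain ⟨hevs', hpar'⟩ := (latP_B hsor c').mp hlat'
        have hones : ∀ t ∈ I, t ≠ s → t ≠ j → c' t = 1 := by
          intro t ht hts htj
          have := hbnd t ht
          have := hshape t ht
          rw [if_neg hts, if_neg htj] at this
          omega
        have hcs' : c' s = 2 := by
          have h1 := hbnd s hsI
          rw [hcs] at h1
          obtain ⟨t, ht⟩ := hevs'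
          omega
        have hcj' : c' j = 2 := by
          have h1 := hbnd j hj
          rw [hcj] at h1
          rcases show c' j = 1 ∨ c' j = 2 by omega with h | h
          · exfalso
            have hS0' : S0 n I c' = ∑ i ∈ I ∩ Icc 1 (n-2), i := by
              refine S0_ones c' (fun i hi => ?_)
              have := mem_Icc.mp (mem_inter.mp hi).2
              rcases eq_or_ne i j with rfl | hij
              · exact h
              · exact hones i (mem_inter.mp hi).1 (by omega) hij
            rw [hS0'] at hpar'
            have hd : c' s / 2 = 1 := by omega
            rw [hd, Nat.even_iff] at hpar'
            obtain ⟨u, hu⟩ := hSig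
            omega
          · exact h
        intro i hi
        rcases eq_or_ne i s with rfl | his
        · rw [hcs', hshape i hi, if_pos rfl]
        · rcases eq_or_ne i j with rfl | hij
          · rw [hcj', hshape i hi, if_neg his, if_pos rfl]
          · rw [hones i hi his hij, hshape i hi, if_neg his, if_neg hij]

lemma classifyB_odd (hn : 4 ≤ n) (hI : I ⊆ Icc 1 n) (hsor : BCond n I s)
    (hSig : Odd (∑ i ∈ I ∩ Icc 1 (n-2), i)) (c : ℕ → ℕ) :
    MinP n I c ↔ ∀ i ∈ I, c i = if i = s then 2 else 1 := by
  have hsI := hsor.sI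
  have hslow := hsor.slow hn hI
  have hshigh := hsor.shigh hn
  have hSt := Nat.odd_iff.mp hSig
  constructor
  · rintro ⟨hb, hlat, hmin⟩
    obtain ⟨hevs, hpar⟩ := (latP_B hsor c).mp hlat
    have hub := low_le_two hn hI hb hlat hmin
    have hev1 := low_even_one hn hI hb hlat hmin
    have huniq := low_bump_unique hn hI hb hlat hmin
    rcases cs_two_or_four hn hI hsor hb hlat hmin with hcs | hcs
    · have hS0odd : Odd (S0 n I c) := by
        have hd : c s / 2 = 1 := by omega
        rw [hd, Nat.even_iff] at hpar
        rw [Nat.odd_iff]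
        omega
      have hnob : ∀ k ∈ I, k ≠ s → c k = 1 := by
        intro k hk hks
        have hklow := hslow k hk hks
        by_contra hne
        have hck : c k = 2 := by have := hb k hk; have := hub k hk hklow; omega
        have hkodd : Odd k := by
          by_contra h
          rw [Nat.not_odd_iff_even] at h
          have := hev1 k hk hklow h
          omega
        have hk1 : 1 ≤ k := (mem_Icc.mp (hI hk)).1
        have hkm : k ∈ I ∩ Icc 1 (n-2) := mem_inter.mpr ⟨hk, mem_Icc.mpr ⟨hk1, hklow⟩⟩
        have hlowv : ∀ i ∈ I ∩ Icc 1 (n-2), c i = if i = k then 1 + 1 else 1 := by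
          intro i hi
          obtain ⟨hiI, hiIcc⟩ := mem_inter.mp hi
          have hi2 := (mem_Icc.mp hiIcc).2
          rcases eq_or_ne i k with rfl | hik
          · rw [if_pos rfl]; exact hck
          · rw [if_neg hik]
            by_contra hne'
            have hci : c i = 2 := by have := hb i hiI; have := hub i hiI hi2; omega
            exact hik (huniq i hiI hi2 hci k hk hklow hck)
        have hS0 : S0 n I c = (∑ i ∈ I ∩ Icc 1 (n-2), i) + k := by
          rw [S0_shape c 1 k hlowv, if_pos hkm, mul_one]
        rw [hS0, Nat.odd_iff] at hS0odd
        obtain ⟨a, ha⟩ := hkodd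
        omega
      intro i hi
      rcases eq_or_ne i s with rfl | his
      · rw [if_pos rfl]; exact hcs
      · rw [if_neg his]; exact hnob i hi his
    · exfalso
      have hS0even : Even (S0 n I c) := by
        have hd : c s / 2 = 2 := by omega
        rw [hd, Nat.even_iff] at hpar
        rw [Nat.even_iff]
        omega
      have hex : ∃ j ∈ I, j ≠ s ∧ c j = 2 := by
        by_contra h
        push_neg at h
        have hall : ∀ i ∈ I ∩ Icc 1 (n-2), c i = 1 := by
          intro i hi
          obtain ⟨hiI, hiIcc⟩ := mem_inter.mp hi
          have hi2 := (mem_Icc.mp hiIcc).2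
          have his : i ≠ s := by omega
          have := h i hiI his
          have := hb i hiI
          have := hub i hiI hi2
          omega
        rw [S0_ones c hall, Nat.even_iff] at hS0even
        omega
      obtain ⟨j, hj, hjs, hcj⟩ := hex
      have hjlow := hslow j hj hjs
      have hjodd : Odd j := by
        by_contra h
        rw [Nat.not_odd_iff_even] at h
        have := hev1 j hj hjlow h
        omega
      have hj1 : 1 ≤ j := hjodd.pos
      have hjm : j ∈ I ∩ Icc 1 (n-2) := mem_inter.mpr ⟨hj, mem_Icc.mpr ⟨hj1, hjlow⟩⟩
      have hS1 := S0_update c 1 hjm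
      have hlat' : latP n I (Function.update (Function.update c j 1) s 2) := by
        rw [latP_B hsor, Function.update_self, S0_update_high _ hshigh]
        refine ⟨by decide, ?_⟩
        rw [Nat.even_iff]
        rw [Nat.even_iff] at hS0even
        have e1 : j * c j = 2 * j := by rw [hcj]; ring
        have e2 : j * 1 = j := by ring
        obtain ⟨a, ha⟩ := hjodd
        omega
      have hbnd : ∀ t ∈ I, 1 ≤ Function.update (Function.update c j 1) s 2 t ∧
          Function.update (Function.update c j 1) s 2 t ≤ c t := by
        intro t ht
        rcases eq_or_ne t s with rfl | hts
        · rw [Function.update_self]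
          constructor
          · omega
          · omega
        · rw [Function.update_of_ne hts]
          rcases eq_or_ne t j with rfl | htj
          · rw [Function.update_self]
            exact ⟨le_refl _, hb t ht⟩
          · rw [Function.update_of_ne htj]
            exact ⟨hb t ht, le_refl _⟩
      have := hmin _ hbnd hlat' s hsI
      rw [Function.update_self] at this
      omega
  · intro hshape
    have hcs : c s = 2 := by rw [hshape s hsI, if_pos rfl]
    have hS0 : S0 n I c = ∑ i ∈ I ∩ Icc 1 (n-2), i := by
      refine S0_ones c (fun i hi => ?_)
      have := mem_Icc.mp (mem_inter.mp hi).2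
      rw [hshape i (mem_inter.mp hi).1, if_neg (by omega)]
    refine ⟨fun i hi => by rw [hshape i hi]; split <;> omega, ?_, ?_⟩
    · rw [latP_B hsor, hS0, hcs]
      exact ⟨by decide, by rw [Nat.even_iff]; omega⟩
    · intro c' hbnd hlat'
      obtain ⟨hevs', _⟩ := (latP_B hsor c').mp hlat'
      intro i hi
      rcases eq_or_ne i s with rfl | his
      · have h0 := hbnd i hi
        rw [hcs] at h0
        obtain ⟨t, ht⟩ := hevs'
        rw [hshape i hi, if_pos rfl]
        omega
      · have h0 := hbnd i hi
        have h3 := hshape i hi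
        rw [if_neg his] at h3
        rw [h3]
        omega

end ComboB

section ComboC

variable {I : Finset ℕ}

lemma latP_C (h1 : n-1 ∈ I) (h2 : n ∈ I) (c : ℕ → ℕ) :
    latP n I c ↔ Even (c (n-1) + c n) ∧
      Even (S0 n I c + (c (n-1) + c n)/2 + c n) := by
  unfold latP ec
  simp only [if_pos h1, if_pos h2]

lemma classifyC_even (hn : 4 ≤ n) (hI : I ⊆ Icc 1 n) (h1 : n-1 ∈ I) (h2 : n ∈ I)
    (hSig : Even (∑ i ∈ I ∩ Icc 1 (n-2), i)) (c : ℕ → ℕ) :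
    MinP n I c ↔ ∀ i ∈ I, c i = 1 := by
  have hones : latP n I (fun _ => 1) := by
    rw [latP_C h1 h2, S0_ones (fun _ => 1) (fun _ _ => rfl)]
    obtain ⟨t, ht⟩ := hSig
    exact ⟨by decide, by rw [Nat.even_iff]; omega⟩
  constructor
  · rintro ⟨hb, _, hmin⟩
    intro i hi
    exact (hmin (fun _ => 1) (fun i hi => ⟨le_refl _, hb i hi⟩) hones i hi).symm
  · intro hc
    refine ⟨fun i hi => (hc i hi).symm ▸ le_refl 1, ?_, ?_⟩
    · rw [latP_C h1 h2, S0_ones c (fun i hi => hc i (mem_inter.mp hi).1),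
        hc (n-1) h1, hc n h2]
      obtain ⟨t, ht⟩ := hSig
      exact ⟨by decide, by rw [Nat.even_iff]; omega⟩
    · intro c' hbnd _ i hi
      have := hbnd i hi
      have := hc i hi
      omega

lemma classifyC_odd (hn : 4 ≤ n) (hI : I ⊆ Icc 1 n) (h1 : n-1 ∈ I) (h2 : n ∈ I)
    (hSig : Odd (∑ i ∈ I ∩ Icc 1 (n-2), i)) (c : ℕ → ℕ) :
    MinP n I c ↔
      ((∃ s, (s = n-1 ∨ s = n) ∧ ∀ i ∈ I, c i = if i = s then 3 else 1) ∨
       (∃ j, j ∈ I ∧ j ≤ n-2 ∧ Odd j ∧ ∀ i ∈ I, c i = if i = j then 2 else 1)) := by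
  have hSigodd := hSig
  constructor
  · rintro ⟨hb, hlat, hmin⟩
    obtain ⟨hev, hpar⟩ := (latP_C h1 h2 c).mp hlat
    have hub := low_le_two hn hI hb hlat hmin
    have hev1 := low_even_one hn hI hb hlat hmin
    have huniq := low_bump_unique hn hI hb hlat hmin
    have hu1 : 1 ≤ c (n-1) := hb _ h1
    have hv1 : 1 ≤ c n := hb _ h2
    -- structure of the low part
    have hbump_or : (∃ j, j ∈ I ∧ j ≤ n-2 ∧ Odd j ∧
          (∀ i ∈ I, i ≤ n-2 → c i = if i = j then 2 else 1) ∧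
          S0 n I c = (∑ i ∈ I ∩ Icc 1 (n-2), i) + j) ∨
        ((∀ i ∈ I, i ≤ n-2 → c i = 1) ∧
          S0 n I c = ∑ i ∈ I ∩ Icc 1 (n-2), i) := by
      by_cases hex : ∃ j, j ∈ I ∧ j ≤ n-2 ∧ c j = 2
      · left
        obtain ⟨j, hj, hjlow, hcj⟩ := hex
        have hjodd : Odd j := by
          by_contra h
          rw [Nat.not_odd_iff_even] at h
          have := hev1 j hj hjlow h
          omega
        have hlowv : ∀ i ∈ I, i ≤ n-2 → c i = if i = j then 2 else 1 := by
          intro i hi hilow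
          rcases eq_or_ne i j with rfl | hij
          · rw [if_pos rfl]; exact hcj
          · rw [if_neg hij]
            by_contra hne
            have hci : c i = 2 := by have := hb i hi; have := hub i hi hilow; omega
            exact hij (huniq i hi hilow hci j hj hjlow hcj)
        have hj1 : 1 ≤ j := hjodd.pos
        have hjm : j ∈ I ∩ Icc 1 (n-2) := mem_inter.mpr ⟨hj, mem_Icc.mpr ⟨hj1, hjlow⟩⟩
        refine ⟨j, hj, hjlow, hjodd, hlowv, ?_⟩
        have hcI0 : ∀ i ∈ I ∩ Icc 1 (n-2), c i = if i = j then 1 + 1 else 1 := by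
          intro i hi
          have := mem_Icc.mp (mem_inter.mp hi).2
          rw [hlowv i (mem_inter.mp hi).1 (by omega)]
        rw [S0_shape c 1 j hcI0, if_pos hjm, mul_one]
      · right
        push_neg at hex
        have hlowv : ∀ i ∈ I, i ≤ n-2 → c i = 1 := by
          intro i hi hilow
          have := hb i hi
          have := hub i hi hilow
          have := hex i hi hilow
          omega
        refine ⟨hlowv, ?_⟩
        refine S0_ones c (fun i hi => ?_)
        have := mem_Icc.mp (mem_inter.mp hi).2
        exact hlowv i (mem_inter.mp hi).1 (by omega)
    -- bounds on high coefficients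
    have hnotboth : ¬ (3 ≤ c (n-1) ∧ 3 ≤ c n) := by
      rintro ⟨h3u, h3v⟩
      have hc'1 : Function.update (Function.update c (n-1) (c (n-1) - 2)) n (c n - 2) (n-1)
          = c (n-1) - 2 := by
        rw [Function.update_of_ne (by omega), Function.update_self]
      have hc'2 : Function.update (Function.update c (n-1) (c (n-1) - 2)) n (c n - 2) n
          = c n - 2 := Function.update_self _ _ _
      have hS' : S0 n I (Function.update (Function.update c (n-1) (c (n-1) - 2)) n (c n - 2))
          = S0 n I c := by
        rw [S0_update_high _ (by omega : ¬ (n ≤ n-2)),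
          S0_update_high _ (by omega : ¬ (n-1 ≤ n-2))]
      have hlat' : latP n I (Function.update (Function.update c (n-1) (c (n-1) - 2)) n (c n - 2)) := by
        rw [latP_C h1 h2, hc'1, hc'2, hS']
        rw [Nat.even_iff] at hev ⊢
        rw [Nat.even_iff] at hpar
        constructor
        · omega
        · rw [Nat.even_iff]
          omega
      have hbnd : ∀ t ∈ I, 1 ≤ Function.update (Function.update c (n-1) (c (n-1) - 2)) n (c n - 2) t ∧
          Function.update (Function.update c (n-1) (c (n-1) - 2)) n (c n - 2) t ≤ c t := by
        intro t ht
        rcases eq_or_ne t n with rfl | htn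
        · rw [Function.update_self]; omega
        · rw [Function.update_of_ne htn]
          rcases eq_or_ne t (n-1) with rfl | htm
          · rw [Function.update_self]; omega
          · rw [Function.update_of_ne htm]; exact ⟨hb t ht, le_refl _⟩
      have := hmin _ hbnd hlat' n h2
      rw [hc'2] at this
      omega
    have huub : c (n-1) ≤ 4 := by
      by_contra hgt
      push_neg at hgt
      have hlat' : latP n I (Function.update c (n-1) (c (n-1) - 4)) := by
        rw [latP_C h1 h2, Function.update_self,
          Function.update_of_ne (by omega : n ≠ n-1),
          S0_update_high _ (by omega : ¬ (n-1 ≤ n-2))]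
        rw [Nat.even_iff] at hev hpar ⊢
        constructor
        · omega
        · rw [Nat.even_iff]
          omega
      have := hmin _ (update_bounds c hb (by omega) (by omega)) hlat' (n-1) h1
      rw [Function.update_self] at this
      omega
    have hvub : c n ≤ 4 := by
      by_contra hgt
      push_neg at hgt
      have hlat' : latP n I (Function.update c n (c n - 4)) := by
        rw [latP_C h1 h2, Function.update_self,
          Function.update_of_ne (by omega : n-1 ≠ n),
          S0_update_high _ (by omega : ¬ (n ≤ n-2))]
        rw [Nat.even_iff] at hev hpar ⊢
        constructor
        · omega
        · rw [Nat.even_iff]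
          omega
      have := hmin _ (update_bounds c hb (by omega) (by omega)) hlat' n h2
      rw [Function.update_self] at this
      omega
    have hcases : (c (n-1) = 1 ∧ c n = 1) ∨ (c (n-1) = 1 ∧ c n = 3) ∨
        (c (n-1) = 3 ∧ c n = 1) ∨ (c (n-1) = 2 ∧ c n = 2) ∨
        (c (n-1) = 2 ∧ c n = 4) ∨ (c (n-1) = 4 ∧ c n = 2) := by
      rw [Nat.even_iff] at hev
      omega
    have hSt := Nat.odd_iff.mp hSig
    rcases hcases with ⟨hcu, hcv⟩ | ⟨hcu, hcv⟩ | ⟨hcu, hcv⟩ | ⟨hcu, hcv⟩ | ⟨hcu, hcv⟩ | ⟨hcu, hcv⟩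
    · -- (1,1) : must have a bump
      rcases hbump_or with ⟨j, hj, hjlow, hjodd, hlowv, hS0⟩ | ⟨hlowv, hS0⟩
      · right
        refine ⟨j, hj, hjlow, hjodd, ?_⟩
        intro i hi
        rcases eq_or_ne i (n-1) with rfl | hinm
        · rw [if_neg (by omega), hcu]
        · rcases eq_or_ne i n with rfl | hin
          · rw [if_neg (by omega), hcv]
          · have : i ≤ n-2 := by have := mem_Icc.mp (hI hi); omega
            exact hlowv i hi this
      · exfalso
        rw [hS0, hcu, hcv, Nat.even_iff] at hpar
        omega
    · -- (1,3) : no bump, s = n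
      rcases hbump_or with ⟨j, hj, hjlow, hjodd, hlowv, hS0⟩ | ⟨hlowv, hS0⟩
      · exfalso
        rw [hS0, hcu, hcv, Nat.even_iff] at hpar
        obtain ⟨a, ha⟩ := hjodd
        omega
      · left
        refine ⟨n, Or.inr rfl, ?_⟩
        intro i hi
        rcases eq_or_ne i n with rfl | hin
        · rw [if_pos rfl]; exact hcv
        · rw [if_neg hin]
          rcases eq_or_ne i (n-1) with rfl | hinm
          · exact hcu
          · have : i ≤ n-2 := by have := mem_Icc.mp (hI hi); omega
            exact hlowv i hi this
    · -- (3,1) : no bump, s = n-1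
      rcases hbump_or with ⟨j, hj, hjlow, hjodd, hlowv, hS0⟩ | ⟨hlowv, hS0⟩
      · exfalso
        rw [hS0, hcu, hcv, Nat.even_iff] at hpar
        obtain ⟨a, ha⟩ := hjodd
        omega
      · left
        refine ⟨n-1, Or.inl rfl, ?_⟩
        intro i hi
        rcases eq_or_ne i (n-1) with rfl | hinm
        · rw [if_pos rfl]; exact hcu
        · rw [if_neg hinm]
          rcases eq_or_ne i n with rfl | hin
          · exact hcv
          · have : i ≤ n-2 := by have := mem_Icc.mp (hI hi); omega
            exact hlowv i hi this
    · -- (2,2) : impossible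
      exfalso
      have hc'1 : Function.update (Function.update c (n-1) 1) n 1 (n-1) = 1 := by
        rw [Function.update_of_ne (by omega), Function.update_self]
      have hc'2 : Function.update (Function.update c (n-1) 1) n 1 n = 1 :=
        Function.update_self _ _ _
      have hS' : S0 n I (Function.update (Function.update c (n-1) 1) n 1) = S0 n I c := by
        rw [S0_update_high _ (by omega : ¬ (n ≤ n-2)),
          S0_update_high _ (by omega : ¬ (n-1 ≤ n-2))]
      have hlat' : latP n I (Function.update (Function.update c (n-1) 1) n 1) := by
        rw [latP_C h1 h2, hc'1, hc'2, hS']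
        rw [hcu, hcv, Nat.even_iff] at hpar
        exact ⟨by decide, by rw [Nat.even_iff]; omega⟩
      have hbnd : ∀ t ∈ I, 1 ≤ Function.update (Function.update c (n-1) 1) n 1 t ∧
          Function.update (Function.update c (n-1) 1) n 1 t ≤ c t := by
        intro t ht
        rcases eq_or_ne t n with rfl | htn
        · rw [Function.update_self]; omega
        · rw [Function.update_of_ne htn]
          rcases eq_or_ne t (n-1) with rfl | htm
          · rw [Function.update_self]; omega
          · rw [Function.update_of_ne htm]; exact ⟨hb t ht, le_refl _⟩
      have := hmin _ hbnd hlat' n h2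
      rw [hc'2] at this
      omega
    · -- (2,4) : impossible
      exfalso
      have hc'1 : Function.update (Function.update c (n-1) 1) n 3 (n-1) = 1 := by
        rw [Function.update_of_ne (by omega), Function.update_self]
      have hc'2 : Function.update (Function.update c (n-1) 1) n 3 n = 3 :=
        Function.update_self _ _ _
      have hS' : S0 n I (Function.update (Function.update c (n-1) 1) n 3) = S0 n I c := by
        rw [S0_update_high _ (by omega : ¬ (n ≤ n-2)),
          S0_update_high _ (by omega : ¬ (n-1 ≤ n-2))]
      have hlat' : latP n I (Function.update (Function.update c (n-1) 1) n 3) := by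
        rw [latP_C h1 h2, hc'1, hc'2, hS']
        rw [hcu, hcv, Nat.even_iff] at hpar
        exact ⟨by decide, by rw [Nat.even_iff]; omega⟩
      have hbnd : ∀ t ∈ I, 1 ≤ Function.update (Function.update c (n-1) 1) n 3 t ∧
          Function.update (Function.update c (n-1) 1) n 3 t ≤ c t := by
        intro t ht
        rcases eq_or_ne t n with rfl | htn
        · rw [Function.update_self]; omega
        · rw [Function.update_of_ne htn]
          rcases eq_or_ne t (n-1) with rfl | htm
          · rw [Function.update_self]; omega
          · rw [Function.update_of_ne htm]; exact ⟨hb t ht, le_refl _⟩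
      have := hmin _ hbnd hlat' n h2
      rw [hc'2] at this
      omega
    · -- (4,2) : impossible
      exfalso
      have hc'1 : Function.update (Function.update c (n-1) 3) n 1 (n-1) = 3 := by
        rw [Function.update_of_ne (by omega), Function.update_self]
      have hc'2 : Function.update (Function.update c (n-1) 3) n 1 n = 1 :=
        Function.update_self _ _ _
      have hS' : S0 n I (Function.update (Function.update c (n-1) 3) n 1) = S0 n I c := by
        rw [S0_update_high _ (by omega : ¬ (n ≤ n-2)),
          S0_update_high _ (by omega : ¬ (n-1 ≤ n-2))]
      have hlat' : latP n I (Function.update (Function.update c (n-1) 3) n 1) := by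
        rw [latP_C h1 h2, hc'1, hc'2, hS']
        rw [hcu, hcv, Nat.even_iff] at hpar
        exact ⟨by decide, by rw [Nat.even_iff]; omega⟩
      have hbnd : ∀ t ∈ I, 1 ≤ Function.update (Function.update c (n-1) 3) n 1 t ∧
          Function.update (Function.update c (n-1) 3) n 1 t ≤ c t := by
        intro t ht
        rcases eq_or_ne t n with rfl | htn
        · rw [Function.update_self]; omega
        · rw [Function.update_of_ne htn]
          rcases eq_or_ne t (n-1) with rfl | htm
          · rw [Function.update_self]; omega
          · rw [Function.update_of_ne htm]; exact ⟨hb t ht, le_refl _⟩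
      have := hmin _ hbnd hlat' (n-1) h1
      rw [hc'1] at this
      omega
  · rintro (⟨s, hs, hshape⟩ | ⟨j, hj, hjlow, hjodd, hshape⟩)
    · -- shape with c s = 3
      have hs' : n-1 ≤ s ∧ s ≤ n := by rcases hs with rfl | rfl <;> omega
      have hlow1 : ∀ i ∈ I ∩ Icc 1 (n-2), c i = 1 := by
        intro i hi
        have := mem_Icc.mp (mem_inter.mp hi).2
        rw [hshape i (mem_inter.mp hi).1, if_neg (by omega)]
      have hS0 : S0 n I c = ∑ i ∈ I ∩ Icc 1 (n-2), i := S0_ones c hlow1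
      have hSt := Nat.odd_iff.mp hSig
      rcases hs with rfl | hseq
      · -- s = n-1
        have hcu : c (n-1) = 3 := by rw [hshape _ h1, if_pos rfl]
        have hcv : c n = 1 := by rw [hshape _ h2, if_neg (by omega)]
        refine ⟨fun i hi => by rw [hshape i hi]; split <;> omega, ?_, ?_⟩
        · rw [latP_C h1 h2, hS0, hcu, hcv]
          exact ⟨by decide, by rw [Nat.even_iff]; omega⟩
        · intro c' hbnd hlat'
          obtain ⟨hev', hpar'⟩ := (latP_C h1 h2 c').mp hlat'
          have hones : ∀ t ∈ I, t ≠ n-1 → c' t = 1 := by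
            intro t ht hts
            have h0 := hbnd t ht
            have h3 := hshape t ht
            rw [if_neg hts] at h3
            omega
          have hS0' : S0 n I c' = ∑ i ∈ I ∩ Icc 1 (n-2), i := by
            refine S0_ones c' (fun i hi => ?_)
            have := mem_Icc.mp (mem_inter.mp hi).2
            exact hones i (mem_inter.mp hi).1 (by omega)
          have hcv' : c' n = 1 := hones n h2 (by omega)
          have hcu' : c' (n-1) = 3 := by
            have h0 := hbnd (n-1) h1
            rw [hcu] at h0
            rw [hcv', Nat.even_iff] at hev'
            rcases show c' (n-1) = 1 ∨ c' (n-1) = 3 by omega with h | h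
            · exfalso
              rw [hS0', hcv', h, Nat.even_iff] at hpar'
              omega
            · exact h
          intro i hi
          rcases eq_or_ne i (n-1) with rfl | his
          · rw [hcu', hcu]
          · rw [hones i hi his, hshape i hi, if_neg his]
      · -- s = n
        rw [hseq] at hshape
        have hcu : c (n-1) = 1 := by rw [hshape _ h1, if_neg (by omega)]
        have hcv : c n = 3 := by rw [hshape _ h2, if_pos rfl]
        refine ⟨fun i hi => by rw [hshape i hi]; split <;> omega, ?_, ?_⟩
        · rw [latP_C h1 h2, hS0, hcu, hcv]
          exact ⟨by decide, by rw [Nat.even_iff]; omega⟩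
        · intro c' hbnd hlat'
          obtain ⟨hev', hpar'⟩ := (latP_C h1 h2 c').mp hlat'
          have hones : ∀ t ∈ I, t ≠ n → c' t = 1 := by
            intro t ht hts
            have h0 := hbnd t ht
            have h3 := hshape t ht
            rw [if_neg hts] at h3
            omega
          have hS0' : S0 n I c' = ∑ i ∈ I ∩ Icc 1 (n-2), i := by
            refine S0_ones c' (fun i hi => ?_)
            have := mem_Icc.mp (mem_inter.mp hi).2
            exact hones i (mem_inter.mp hi).1 (by omega)
          have hcu' : c' (n-1) = 1 := hones (n-1) h1 (by omega)
          have hcv' : c' n = 3 := by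
            have h0 := hbnd n h2
            rw [hcv] at h0
            rw [hcu', Nat.even_iff] at hev'
            rcases show c' n = 1 ∨ c' n = 3 by omega with h | h
            · exfalso
              rw [hS0', hcu', h, Nat.even_iff] at hpar'
              omega
            · exact h
          intro i hi
          rcases eq_or_ne i n with rfl | his
          · rw [hcv', hcv]
          · rw [hones i hi his, hshape i hi, if_neg his]
    · -- shape with a low bump
      have hj1 : 1 ≤ j := hjodd.pos
      have hjm : j ∈ I ∩ Icc 1 (n-2) := mem_inter.mpr ⟨hj, mem_Icc.mpr ⟨hj1, hjlow⟩⟩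
      have hcI0 : ∀ i ∈ I ∩ Icc 1 (n-2), c i = if i = j then 1 + 1 else 1 := by
        intro i hi
        rw [hshape i (mem_inter.mp hi).1]
      have hS0 : S0 n I c = (∑ i ∈ I ∩ Icc 1 (n-2), i) + j := by
        rw [S0_shape c 1 j hcI0, if_pos hjm, mul_one]
      have hcu : c (n-1) = 1 := by rw [hshape _ h1, if_neg (by omega)]
      have hcv : c n = 1 := by rw [hshape _ h2, if_neg (by omega)]
      have hSt := Nat.odd_iff.mp hSig
      obtain ⟨a, ha⟩ := hjodd
      refine ⟨fun i hi => by rw [hshape i hi]; split <;> omega, ?_, ?_⟩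
      · rw [latP_C h1 h2, hS0, hcu, hcv]
        exact ⟨by decide, by rw [Nat.even_iff]; omega⟩
      · intro c' hbnd hlat'
        obtain ⟨hev', hpar'⟩ := (latP_C h1 h2 c').mp hlat'
        have hones : ∀ t ∈ I, t ≠ j → c' t = 1 := by
          intro t ht hts
          have h0 := hbnd t ht
          have h3 := hshape t ht
          rw [if_neg hts] at h3
          omega
        have hcu' : c' (n-1) = 1 := hones (n-1) h1 (by omega)
        have hcv' : c' n = 1 := hones n h2 (by omega)
        have hcj' : c' j = 2 := by
          have h0 := hbnd j hj
          have h3 := hshape j hj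
          rw [if_pos rfl] at h3
          rcases show c' j = 1 ∨ c' j = 2 by omega with h | h
          · exfalso
            have hS0' : S0 n I c' = ∑ i ∈ I ∩ Icc 1 (n-2), i := by
              refine S0_ones c' (fun i hi => ?_)
              rcases eq_or_ne i j with rfl | hij
              · exact h
              · exact hones i (mem_inter.mp hi).1 hij
            rw [hS0', hcu', hcv', Nat.even_iff] at hpar'
            omega
          · exact h
        intro i hi
        rcases eq_or_ne i j with rfl | hij
        · rw [hcj', hshape i hi, if_pos rfl]
        · rw [hones i hi hij, hshape i hi, if_neg hij]

end ComboC

lemma icanon_iff (hn : 4 ≤ n) (hodd : Odd n) {I : Finset ℕ} (hI : I ⊆ Icc 1 n)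
    (ξ : Fin n → ℝ) :
    ξ ∈ ICanonSet n (JSpin n) (Hso n) I ↔
      ∃ c : ℕ → ℕ, MinP n I c ∧ ξ = ∑ i ∈ I, c i • Hso n i := by
  constructor
  · rintro ⟨c, hb, hxi, hmem, hmin⟩
    refine ⟨c, ⟨hb, (mem_iff hn hodd hI c).mp (hxi ▸ hmem), ?_⟩, hxi⟩
    intro c' hbnd hlat'
    have heq := hmin c' hbnd ((mem_iff hn hodd hI c').mpr hlat')
    exact xi_inj hn hI (heq.trans hxi)
  · rintro ⟨c, ⟨hb, hlat, hminA⟩, hxi⟩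
    refine ⟨c, hb, hxi, hxi ▸ (mem_iff hn hodd hI c).mpr hlat, ?_⟩
    intro c' hbnd hmem'
    have := hminA c' hbnd ((mem_iff hn hodd hI c').mp hmem')
    rw [hxi]
    exact Finset.sum_congr rfl (fun i hi => by rw [this i hi])

lemma sum_shape_zero {I : Finset ℕ} (c : ℕ → ℕ) (hc : ∀ i ∈ I, c i = 1) :
    ∑ i ∈ I, c i • Hso n i = ∑ i ∈ I, Hso n i :=
  Finset.sum_congr rfl (fun i hi => by rw [hc i hi, one_smul])

lemma sum_shape_one {I : Finset ℕ} (s d : ℕ) (hs : s ∈ I) (c : ℕ → ℕ)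
    (hc : ∀ i ∈ I, c i = if i = s then 1 + d else 1) :
    ∑ i ∈ I, c i • Hso n i = (∑ i ∈ I, Hso n i) + d • Hso n s := by
  have h : ∀ i ∈ I, c i • Hso n i = Hso n i + (if i = s then d • Hso n s else 0) := by
    intro i hi
    rw [hc i hi]
    rcases eq_or_ne i s with rfl | hne
    · rw [if_pos rfl, if_pos rfl, add_smul, one_smul]
    · rw [if_neg hne, if_neg hne, one_smul, add_zero]
  rw [Finset.sum_congr rfl h, Finset.sum_add_distrib,
    Finset.sum_ite_eq' I s (fun _ => d • Hso n s), if_pos hs]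

lemma sum_shape_two {I : Finset ℕ} (s j ds dj : ℕ) (hs : s ∈ I) (hj : j ∈ I) (hne : s ≠ j)
    (c : ℕ → ℕ)
    (hc : ∀ i ∈ I, c i = if i = s then 1 + ds else if i = j then 1 + dj else 1) :
    ∑ i ∈ I, c i • Hso n i = (∑ i ∈ I, Hso n i) + ds • Hso n s + dj • Hso n j := by
  have h : ∀ i ∈ I, c i • Hso n i
      = (Hso n i + (if i = s then ds • Hso n s else 0)) + (if i = j then dj • Hso n j else 0) := by
    intro i hi
    rw [hc i hi]
    rcases eq_or_ne i s with rfl | hns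
    · rw [if_pos rfl, if_pos rfl, if_neg hne, add_smul, one_smul, add_zero]
    · rw [if_neg hns, if_neg hns]
      rcases eq_or_ne i j with rfl | hnj
      · rw [if_pos rfl, if_pos rfl, add_smul, one_smul, add_zero]
      · rw [if_neg hnj, if_neg hnj, one_smul, add_zero, add_zero]
  rw [Finset.sum_congr rfl h, Finset.sum_add_distrib, Finset.sum_add_distrib,
    Finset.sum_ite_eq' I s (fun _ => ds • Hso n s), if_pos hs,
    Finset.sum_ite_eq' I j (fun _ => dj • Hso n j), if_pos hj]

end SC

open SC Finset in
/-- The `I`-canonical elements of `Spin(2n)`, `n ≥ 4` odd.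
In each listed expression, a parameter (`j` over odd elements of `I_0`, `s` over
`I ∩ {n-1,n}`) is constrained to its range exactly when the `ε`-coefficient of the
corresponding `H`-term is nonzero (when the coefficient vanishes the term is `0` and
the parameter is immaterial). -/
theorem spin_even_canonical_n_odd (n : ℕ) (hn : 4 ≤ n) (hnodd : Odd n)
    (I : Finset ℕ) (hI : I ⊆ Finset.Icc 1 n) (hne : I.Nonempty) :
    ICanonSet n (JSpin n) (Hso n) I =
      {ξ | (Even (∑ i ∈ I ∩ Finset.Icc 1 (n - 2), i) ∧
              ((∃ s : ℕ, (epsI n I 1 ≠ 0 → s ∈ I ∩ ({n - 1, n} : Finset ℕ)) ∧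
                  ξ = (∑ i ∈ I, Hso n i) + (3 * epsI n I 1) • Hso n s) ∨
               (∃ s j : ℕ,
                  (epsI n I 1 ≠ 0 → s ∈ I ∩ ({n - 1, n} : Finset ℕ) ∧
                    j ∈ I ∩ Finset.Icc 1 (n - 2) ∧ Odd j) ∧
                  ξ = (∑ i ∈ I, Hso n i) + epsI n I 1 • (Hso n s + Hso n j)))) ∨
           (Odd (∑ i ∈ I ∩ Finset.Icc 1 (n - 2), i) ∧
              ((∃ j s : ℕ,
                  (epsI n I 0 ≠ 0 → j ∈ I ∩ Finset.Icc 1 (n - 2) ∧ Odd j) ∧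
                  (epsI n I 1 ≠ 0 ∨ epsI n I 2 ≠ 0 → s ∈ I ∩ ({n - 1, n} : Finset ℕ)) ∧
                  ξ = (∑ i ∈ I, Hso n i) + epsI n I 0 • Hso n j +
                        epsI n I 1 • Hso n s + (2 * epsI n I 2) • Hso n s) ∨
               (∃ j s : ℕ,
                  (epsI n I 0 ≠ 0 ∨ epsI n I 2 ≠ 0 → j ∈ I ∩ Finset.Icc 1 (n - 2) ∧ Odd j) ∧
                  (epsI n I 1 ≠ 0 → s ∈ I ∩ ({n - 1, n} : Finset ℕ)) ∧
                  ξ = (∑ i ∈ I, Hso n i) + epsI n I 0 • Hso n j +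
                        epsI n I 1 • Hso n s + epsI n I 2 • Hso n j)))} := by
  have hnm : (n : ℕ) - 1 ≠ n := by omega
  ext ξ
  rw [SC.icanon_iff hn hnodd hI ξ]
  simp only [Set.mem_setOf_eq]
  by_cases h1 : n-1 ∈ I <;> by_cases h2 : n ∈ I
  · -- Combo C : both
    have hpair : I ∩ ({n-1, n} : Finset ℕ) = {n-1, n} := by
      ext x
      simp only [mem_inter, mem_insert, mem_singleton]
      constructor
      · tauto
      · rintro (rfl | rfl)
        exacts [⟨h1, Or.inl rfl⟩, ⟨h2, Or.inr rfl⟩]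
    have hcard : (I ∩ ({n-1, n} : Finset ℕ)).card = 2 := by
      rw [hpair]; exact Finset.card_pair hnm
    have he0 : epsI n I 0 = 0 := by simp [epsI, hcard]
    have he1 : epsI n I 1 = 0 := by simp [epsI, hcard]
    have he2 : epsI n I 2 = 1 := by simp [epsI, hcard]
    rcases Nat.even_or_odd (∑ i ∈ I ∩ Finset.Icc 1 (n-2), i) with hSig | hSig
    · constructor
      · rintro ⟨c, hMin, rfl⟩
        have hsh := (SC.classifyC_even hn hI h1 h2 hSig c).mp hMin
        refine Or.inl ⟨hSig, Or.inl ⟨0, fun h => absurd he1 h, ?_⟩⟩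
        rw [SC.sum_shape_zero c hsh, he1]
        try simp
      · rintro (⟨hEv, hF⟩ | ⟨hOdd, _⟩)
        · have hxi : ξ = ∑ i ∈ I, Hso n i := by
            rcases hF with ⟨s, _, hx⟩ | ⟨s, j, _, hx⟩ <;> (rw [hx, he1]; simp)
          exact ⟨fun _ => 1, (SC.classifyC_even hn hI h1 h2 hSig _).mpr (fun _ _ => rfl),
            by rw [hxi, SC.sum_shape_zero (fun _ => 1) (fun _ _ => rfl)]⟩
        · exact absurd hOdd (Nat.not_odd_iff_even.mpr hSig)
    · constructor
      · rintro ⟨c, hMin, rfl⟩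
        rcases (SC.classifyC_odd hn hI h1 h2 hSig c).mp hMin with
          ⟨s, hs, hsh⟩ | ⟨j, hj, hjlow, hjodd, hsh⟩
        · have hsI : s ∈ I := by rcases hs with rfl | rfl; exacts [h1, h2]
          have hsh' : ∀ i ∈ I, c i = if i = s then 1 + 2 else 1 := fun i hi => by rw [hsh i hi]
          refine Or.inr ⟨hSig, Or.inl ⟨0, s, fun h => absurd he0 h,
            fun _ => mem_inter.mpr ⟨hsI, by rcases hs with rfl | rfl <;> simp⟩, ?_⟩⟩
          rw [SC.sum_shape_one s 2 hsI c hsh', he0, he1, he2]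
          try simp
        · have hsh' : ∀ i ∈ I, c i = if i = j then 1 + 1 else 1 := fun i hi => by rw [hsh i hi]
          refine Or.inr ⟨hSig, Or.inr ⟨j, 0,
            fun _ => ⟨mem_inter.mpr ⟨hj, mem_Icc.mpr ⟨hjodd.pos, hjlow⟩⟩, hjodd⟩,
            fun h => absurd he1 h, ?_⟩⟩
          rw [SC.sum_shape_one j 1 hj c hsh', he0, he1, he2]
          try simp
      · rintro (⟨hEv, _⟩ | ⟨hOdd, hG⟩)
        · exact ((Nat.not_odd_iff_even.mpr hEv) hSig).elim
        rcases hG with ⟨j, s, hg1, hg2, hx⟩ | ⟨j, s, hg1, hg2, hx⟩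
        · have hs := hg2 (Or.inr (by rw [he2]; exact one_ne_zero))
          obtain ⟨hsI, hspair⟩ := mem_inter.mp hs
          have hsor : s = n-1 ∨ s = n := by simpa using hspair
          refine ⟨fun i => if i = s then 3 else 1,
            (SC.classifyC_odd hn hI h1 h2 hSig _).mpr (Or.inl ⟨s, hsor, fun i _ => rfl⟩), ?_⟩
          rw [hx, he0, he1, he2, SC.sum_shape_one s 2 hsI _ (fun i _ => rfl)]
          try simp
        · have hjj := hg1 (Or.inr (by rw [he2]; exact one_ne_zero))
          obtain ⟨hjmem, hjodd⟩ := hjj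
          obtain ⟨hjI, hjIcc⟩ := mem_inter.mp hjmem
          refine ⟨fun i => if i = j then 2 else 1,
            (SC.classifyC_odd hn hI h1 h2 hSig _).mpr
              (Or.inr ⟨j, hjI, (mem_Icc.mp hjIcc).2, hjodd, fun i _ => rfl⟩), ?_⟩
          rw [hx, he0, he1, he2, SC.sum_shape_one j 1 hjI _ (fun i _ => rfl)]
          try simp
  · -- Combo B with s = n-1
    have hsor : SC.BCond n I (n-1) := Or.inl ⟨rfl, h1, h2⟩
    have hpair : I ∩ ({n-1, n} : Finset ℕ) = {n-1} := by
      ext x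
      simp only [mem_inter, mem_insert, mem_singleton]
      constructor
      · rintro ⟨hx, rfl | rfl⟩
        · rfl
        · exact absurd hx h2
      · rintro rfl
        exact ⟨h1, Or.inl rfl⟩
    have hcard : (I ∩ ({n-1, n} : Finset ℕ)).card = 1 := by
      rw [hpair]; exact Finset.card_singleton _
    have he0 : epsI n I 0 = 0 := by simp [epsI, hcard]
    have he1 : epsI n I 1 = 1 := by simp [epsI, hcard]
    have he2 : epsI n I 2 = 0 := by simp [epsI, hcard]
    have hsmem : n-1 ∈ I ∩ ({n-1, n} : Finset ℕ) := mem_inter.mpr ⟨h1, by simp⟩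
    rcases Nat.even_or_odd (∑ i ∈ I ∩ Finset.Icc 1 (n-2), i) with hSig | hSig
    · constructor
      · rintro ⟨c, hMin, rfl⟩
        rcases (SC.classifyB_even hn hI hsor hSig c).mp hMin with
          hsh | ⟨j, hjI, hjlow, hjodd, hsh⟩
        · have hsh' : ∀ i ∈ I, c i = if i = n-1 then 1 + 3 else 1 := fun i hi => by rw [hsh i hi]
          refine Or.inl ⟨hSig, Or.inl ⟨n-1, fun _ => hsmem, ?_⟩⟩
          rw [SC.sum_shape_one (n-1) 3 h1 c hsh', he1]
          try simp
        · have hsh' : ∀ i ∈ I, c i = if i = n-1 then 1 + 1 else if i = j then 1 + 1 else 1 :=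
            fun i hi => by rw [hsh i hi]
          refine Or.inl ⟨hSig, Or.inr ⟨n-1, j, fun _ => ⟨hsmem,
            mem_inter.mpr ⟨hjI, mem_Icc.mpr ⟨hjodd.pos, hjlow⟩⟩, hjodd⟩, ?_⟩⟩
          rw [SC.sum_shape_two (n-1) j 1 1 h1 hjI (by omega) c hsh', he1]
          try simp [add_assoc]
      · rintro (⟨hEv, hF⟩ | ⟨hOdd, _⟩)
        swap
        · exact absurd hOdd (Nat.not_odd_iff_even.mpr hSig)
        rcases hF with ⟨s, hg, hx⟩ | ⟨s, j, hg, hx⟩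
        · have hs := hg (by rw [he1]; exact one_ne_zero)
          rw [hpair, mem_singleton] at hs
          rw [hs] at hx
          refine ⟨fun i => if i = n-1 then 4 else 1,
            (SC.classifyB_even hn hI hsor hSig _).mpr (Or.inl (fun i _ => rfl)), ?_⟩
          rw [hx, he1, SC.sum_shape_one (n-1) 3 h1 _ (fun i _ => rfl)]
          try simp
        · obtain ⟨hs, hjmem, hjodd⟩ := hg (by rw [he1]; exact one_ne_zero)
          rw [hpair, mem_singleton] at hs
          rw [hs] at hx
          obtain ⟨hjI, hjIcc⟩ := mem_inter.mp hjmem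
          refine ⟨fun i => if i = n-1 then 2 else if i = j then 2 else 1,
            (SC.classifyB_even hn hI hsor hSig _).mpr
              (Or.inr ⟨j, hjI, (mem_Icc.mp hjIcc).2, hjodd, fun i _ => rfl⟩), ?_⟩
          rw [hx, he1, SC.sum_shape_two (n-1) j 1 1 h1 hjI
            (by have := (mem_Icc.mp hjIcc).2; omega) _ (fun i _ => rfl)]
          try simp [add_assoc]
    · constructor
      · rintro ⟨c, hMin, rfl⟩
        have hsh := (SC.classifyB_odd hn hI hsor hSig c).mp hMin
        have hsh' : ∀ i ∈ I, c i = if i = n-1 then 1 + 1 else 1 := fun i hi => by rw [hsh i hi]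
        refine Or.inr ⟨hSig, Or.inl ⟨0, n-1, fun h => absurd he0 h, fun _ => hsmem, ?_⟩⟩
        rw [SC.sum_shape_one (n-1) 1 h1 c hsh', he0, he1, he2]
        try simp
      · rintro (⟨hEv, _⟩ | ⟨hOdd, hG⟩)
        · exact ((Nat.not_odd_iff_even.mpr hEv) hSig).elim
        have hxi : ξ = (∑ i ∈ I, Hso n i) + Hso n (n-1) := by
          rcases hG with ⟨j, s, hg1, hg2, hx⟩ | ⟨j, s, hg1, hg2, hx⟩
          · have hs := hg2 (Or.inl (by rw [he1]; exact one_ne_zero))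
            rw [hpair, mem_singleton] at hs
            rw [hs] at hx
            rw [hx, he0, he1, he2]
            try simp
          · have hs := hg2 (by rw [he1]; exact one_ne_zero)
            rw [hpair, mem_singleton] at hs
            rw [hs] at hx
            rw [hx, he0, he1, he2]
            try simp
        refine ⟨fun i => if i = n-1 then 2 else 1,
          (SC.classifyB_odd hn hI hsor hSig _).mpr (fun i _ => rfl), ?_⟩
        rw [hxi, SC.sum_shape_one (n-1) 1 h1 _ (fun i _ => rfl)]
        try simp
  · -- Combo B with s = n
    have hsor : SC.BCond n I n := Or.inr ⟨rfl, h2, h1⟩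
    have hpair : I ∩ ({n-1, n} : Finset ℕ) = {n} := by
      ext x
      simp only [mem_inter, mem_insert, mem_singleton]
      constructor
      · rintro ⟨hx, rfl | rfl⟩
        · exact absurd hx h1
        · rfl
      · rintro rfl
        exact ⟨h2, Or.inr rfl⟩
    have hcard : (I ∩ ({n-1, n} : Finset ℕ)).card = 1 := by
      rw [hpair]; exact Finset.card_singleton _
    have he0 : epsI n I 0 = 0 := by simp [epsI, hcard]
    have he1 : epsI n I 1 = 1 := by simp [epsI, hcard]
    have he2 : epsI n I 2 = 0 := by simp [epsI, hcard]
    have hsmem : n ∈ I ∩ ({n-1, n} : Finset ℕ) := mem_inter.mpr ⟨h2, by simp⟩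
    rcases Nat.even_or_odd (∑ i ∈ I ∩ Finset.Icc 1 (n-2), i) with hSig | hSig
    · constructor
      · rintro ⟨c, hMin, rfl⟩
        rcases (SC.classifyB_even hn hI hsor hSig c).mp hMin with
          hsh | ⟨j, hjI, hjlow, hjodd, hsh⟩
        · have hsh' : ∀ i ∈ I, c i = if i = n then 1 + 3 else 1 := fun i hi => by rw [hsh i hi]
          refine Or.inl ⟨hSig, Or.inl ⟨n, fun _ => hsmem, ?_⟩⟩
          rw [SC.sum_shape_one n 3 h2 c hsh', he1]
          try simp
        · have hsh' : ∀ i ∈ I, c i = if i = n then 1 + 1 else if i = j then 1 + 1 else 1 :=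
            fun i hi => by rw [hsh i hi]
          refine Or.inl ⟨hSig, Or.inr ⟨n, j, fun _ => ⟨hsmem,
            mem_inter.mpr ⟨hjI, mem_Icc.mpr ⟨hjodd.pos, hjlow⟩⟩, hjodd⟩, ?_⟩⟩
          rw [SC.sum_shape_two n j 1 1 h2 hjI (by omega) c hsh', he1]
          try simp [add_assoc]
      · rintro (⟨hEv, hF⟩ | ⟨hOdd, _⟩)
        swap
        · exact absurd hOdd (Nat.not_odd_iff_even.mpr hSig)
        rcases hF with ⟨s, hg, hx⟩ | ⟨s, j, hg, hx⟩
        · have hs := hg (by rw [he1]; exact one_ne_zero)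
          rw [hpair, mem_singleton] at hs
          rw [hs] at hx
          refine ⟨fun i => if i = n then 4 else 1,
            (SC.classifyB_even hn hI hsor hSig _).mpr (Or.inl (fun i _ => rfl)), ?_⟩
          rw [hx, he1, SC.sum_shape_one n 3 h2 _ (fun i _ => rfl)]
          try simp
        · obtain ⟨hs, hjmem, hjodd⟩ := hg (by rw [he1]; exact one_ne_zero)
          rw [hpair, mem_singleton] at hs
          rw [hs] at hx
          obtain ⟨hjI, hjIcc⟩ := mem_inter.mp hjmem
          refine ⟨fun i => if i = n then 2 else if i = j then 2 else 1,
            (SC.classifyB_even hn hI hsor hSig _).mpr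
              (Or.inr ⟨j, hjI, (mem_Icc.mp hjIcc).2, hjodd, fun i _ => rfl⟩), ?_⟩
          rw [hx, he1, SC.sum_shape_two n j 1 1 h2 hjI
            (by have := (mem_Icc.mp hjIcc).2; omega) _ (fun i _ => rfl)]
          try simp [add_assoc]
    · constructor
      · rintro ⟨c, hMin, rfl⟩
        have hsh := (SC.classifyB_odd hn hI hsor hSig c).mp hMin
        have hsh' : ∀ i ∈ I, c i = if i = n then 1 + 1 else 1 := fun i hi => by rw [hsh i hi]
        refine Or.inr ⟨hSig, Or.inl ⟨0, n, fun h => absurd he0 h, fun _ => hsmem, ?_⟩⟩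
        rw [SC.sum_shape_one n 1 h2 c hsh', he0, he1, he2]
        try simp
      · rintro (⟨hEv, _⟩ | ⟨hOdd, hG⟩)
        · exact ((Nat.not_odd_iff_even.mpr hEv) hSig).elim
        have hxi : ξ = (∑ i ∈ I, Hso n i) + Hso n n := by
          rcases hG with ⟨j, s, hg1, hg2, hx⟩ | ⟨j, s, hg1, hg2, hx⟩
          · have hs := hg2 (Or.inl (by rw [he1]; exact one_ne_zero))
            rw [hpair, mem_singleton] at hs
            rw [hs] at hx
            rw [hx, he0, he1, he2]
            try simp
          · have hs := hg2 (by rw [he1]; exact one_ne_zero)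
            rw [hpair, mem_singleton] at hs
            rw [hs] at hx
            rw [hx, he0, he1, he2]
            try simp
        refine ⟨fun i => if i = n then 2 else 1,
          (SC.classifyB_odd hn hI hsor hSig _).mpr (fun i _ => rfl), ?_⟩
        rw [hxi, SC.sum_shape_one n 1 h2 _ (fun i _ => rfl)]
        try simp
  · -- Combo A : neither
    have hpair : I ∩ ({n-1, n} : Finset ℕ) = ∅ := by
      ext x
      simp only [mem_inter, mem_insert, mem_singleton, Finset.notMem_empty, iff_false]
      rintro ⟨hx, rfl | rfl⟩
      · exact h1 hx
      · exact h2 hx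
    have hcard : (I ∩ ({n-1, n} : Finset ℕ)).card = 0 := by rw [hpair]; rfl
    have he0 : epsI n I 0 = 1 := by simp [epsI, hcard]
    have he1 : epsI n I 1 = 0 := by simp [epsI, hcard]
    have he2 : epsI n I 2 = 0 := by simp [epsI, hcard]
    rcases Nat.even_or_odd (∑ i ∈ I ∩ Finset.Icc 1 (n-2), i) with hSig | hSig
    · constructor
      · rintro ⟨c, hMin, rfl⟩
        have hsh := (SC.classifyA_even hn hI h1 h2 hSig c).mp hMin
        refine Or.inl ⟨hSig, Or.inl ⟨0, fun h => absurd he1 h, ?_⟩⟩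
        rw [SC.sum_shape_zero c hsh, he1]
        try simp
      · rintro (⟨hEv, hF⟩ | ⟨hOdd, _⟩)
        · have hxi : ξ = ∑ i ∈ I, Hso n i := by
            rcases hF with ⟨s, _, hx⟩ | ⟨s, j, _, hx⟩ <;> (rw [hx, he1]; simp)
          exact ⟨fun _ => 1, (SC.classifyA_even hn hI h1 h2 hSig _).mpr (fun _ _ => rfl),
            by rw [hxi, SC.sum_shape_zero (fun _ => 1) (fun _ _ => rfl)]⟩
        · exact absurd hOdd (Nat.not_odd_iff_even.mpr hSig)
    · constructor
      · rintro ⟨c, hMin, rfl⟩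
        obtain ⟨j, hj, hjodd, hsh⟩ := (SC.classifyA_odd hn hI h1 h2 hSig c).mp hMin
        have hjlow := SC.I_low hn hI h1 h2 j hj
        have hsh' : ∀ i ∈ I, c i = if i = j then 1 + 1 else 1 := fun i hi => by rw [hsh i hi]
        refine Or.inr ⟨hSig, Or.inl ⟨j, 0,
          fun _ => ⟨mem_inter.mpr ⟨hj, mem_Icc.mpr hjlow⟩, hjodd⟩,
          fun h => h.elim (fun h' => absurd he1 h') (fun h' => absurd he2 h'), ?_⟩⟩
        rw [SC.sum_shape_one j 1 hj c hsh', he0, he1, he2]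
        try simp
      · rintro (⟨hEv, _⟩ | ⟨hOdd, hG⟩)
        · exact ((Nat.not_odd_iff_even.mpr hEv) hSig).elim
        have hget : ∃ j, (j ∈ I ∩ Finset.Icc 1 (n-2) ∧ Odd j) ∧
            ξ = (∑ i ∈ I, Hso n i) + Hso n j := by
          rcases hG with ⟨j, s, hg1, hg2, hx⟩ | ⟨j, s, hg1, hg2, hx⟩
          · refine ⟨j, hg1 (by rw [he0]; exact one_ne_zero), ?_⟩
            rw [hx, he0, he1, he2]
            simp
          · refine ⟨j, hg1 (Or.inl (by rw [he0]; exact one_ne_zero)), ?_⟩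
            rw [hx, he0, he1, he2]
            simp
        obtain ⟨j, ⟨hjmem, hjodd⟩, hxi⟩ := hget
        obtain ⟨hjI, _⟩ := mem_inter.mp hjmem
        refine ⟨fun i => if i = j then 2 else 1,
          (SC.classifyA_odd hn hI h1 h2 hSig _).mpr ⟨j, hjI, hjodd, fun i _ => rfl⟩, ?_⟩
        rw [hxi, SC.sum_shape_one j 1 hjI _ (fun i _ => rfl)]
        try simp
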